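/- arXiv:2507.09515 — 6 statements merged into one kernel-verified Lean document; each statement's English description precedes it below -/
import Mathlib

section
/- Let F be a field and f ∈ F[x_1,…,x_n] a polynomial such that the system {f = 0, x_1^2 − x_1 = 0, …, x_n^2 − x_n = 0} has no common solution. Let P ∈ F[x_1,…,x_n, y, z_1,…,z_n] satisfy: (i) the degree of P in the variable y is at most 1; (ii) P(x̄, 0, 0̄) = 0; (iii) P(x̄, y, 0̄) is a multilinear polynomial (in the variables x_1,…,x_n and y); and (iv) P(x̄, f(x̄), x_1^2 − x_1, …, x_n^2 − x_n) = 1 as a polynomial identity in F[x_1,…,x_n]. Then P(x̄, 1, 0̄) is the unique multilinear polynomial g ∈ F[x_1,…,x_n] with g(a)·f(a) = 1 for every a ∈ {0,1}^n. -/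
open MvPolynomial

section Helpers

variable {F : Type*} [Field F]

private lemma my_aeval_eq_eval {σ : Type*} (a : σ → F) (p : MvPolynomial σ F) :
    aeval a p = eval a p := by
  rw [← MvPolynomial.coe_aeval_eq_eval]; rfl

private lemma my_eval_aeval {σ τ : Type*} (a : τ → F) (s : σ → MvPolynomial τ F)
    (p : MvPolynomial σ F) :
    eval a (aeval s p) = eval (fun v => eval a (s v)) p := by
  rw [← my_aeval_eq_eval, comp_aeval_apply]
  simp_rw [my_aeval_eq_eval]

private lemma my_ml_eval_zero : ∀ (n : ℕ) (g : MvPolynomial (Fin n) F),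
    (∀ i, g.degreeOf i ≤ 1) →
    (∀ a : Fin n → F, (∀ i, a i = 0 ∨ a i = 1) → eval a g = 0) → g = 0 := by
  intro n
  induction n with
  | zero =>
    intro g _ h
    have h0 := h Fin.elim0 (fun i => i.elim0)
    rw [eq_C_of_isEmpty g] at h0 ⊢
    rw [eval_C] at h0
    rw [h0, map_zero]
  | succ n ih =>
    intro g hdeg h
    set q := finSuccEquiv F n g with hq
    have hnd : q.natDegree ≤ 1 := by
      rw [hq, natDegree_finSuccEquiv]; exact hdeg 0
    have key : ∀ (t : F) (a : Fin n → F), eval (Fin.cons t a) g =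
        eval a (q.coeff 1) * t + eval a (q.coeff 0) := by
      intro t a
      rw [eval_eq_eval_mv_eval', ← hq]
      conv_lhs => rw [Polynomial.eq_X_add_C_of_natDegree_le_one hnd]
      simp
    have hbool : ∀ (t : F), (t = 0 ∨ t = 1) → ∀ (a : Fin n → F),
        (∀ i, a i = 0 ∨ a i = 1) → (∀ i, (Fin.cons t a : Fin (n+1) → F) i = 0 ∨
          (Fin.cons t a : Fin (n+1) → F) i = 1) := by
      intro t ht a ha i
      refine Fin.cases ?_ (fun j => ?_) i
      · simpa using ht
      · simpa using ha j
    have h0 : q.coeff 0 = 0 := by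
      apply ih _ (fun j => (degreeOf_coeff_finSuccEquiv g j 0).trans (hdeg j.succ))
      intro a ha
      have := h (Fin.cons 0 a) (hbool 0 (Or.inl rfl) a ha)
      rw [key 0 a] at this
      simpa using this
    have h1 : q.coeff 1 = 0 := by
      apply ih _ (fun j => (degreeOf_coeff_finSuccEquiv g j 1).trans (hdeg j.succ))
      intro a ha
      have := h (Fin.cons 1 a) (hbool 1 (Or.inr rfl) a ha)
      rw [key 1 a, h0] at this
      simpa using this
    have hq0 : q = 0 := by
      rw [Polynomial.eq_X_add_C_of_natDegree_le_one hnd, h0, h1]; simp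
    have : finSuccEquiv F n g = finSuccEquiv F n 0 := by rw [← hq, hq0, map_zero]
    exact (finSuccEquiv F n).injective this

private lemma my_degreeOf_aeval_one_le {n : ℕ}
    (Q : MvPolynomial (Fin n ⊕ Unit) F) (i : Fin n) :
    degreeOf i (aeval (Sum.elim X fun _ => (1 : MvPolynomial (Fin n) F)) Q)
      ≤ degreeOf (Sum.inl i) Q := by
  conv_lhs => rw [Q.as_sum, map_sum]
  refine (degreeOf_sum_le _ _ _).trans (Finset.sup_le fun m hm => ?_)
  rw [aeval_monomial]
  refine (degreeOf_mul_le _ _ _).trans ?_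
  have h1 : degreeOf i ((algebraMap F (MvPolynomial (Fin n) F)) (coeff m Q)) = 0 :=
    degreeOf_C _ _
  rw [h1, zero_add]
  refine le_trans ?_ (monomial_le_degreeOf _ hm)
  rw [Finsupp.prod]
  refine (degreeOf_prod_le _ _ _).trans ?_
  refine le_trans (Finset.sum_le_sum
    (g := fun v => if v = Sum.inl i then m v else 0) fun v _ => ?_) ?_
  · rcases v with j | u
    · by_cases hji : j = i
      · subst hji
        refine (degreeOf_pow_le _ _ _).trans ?_
        simp [degreeOf_X]
      · refine (degreeOf_pow_le _ _ _).trans ?_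
        have : degreeOf i (X j : MvPolynomial (Fin n) F) = 0 := by
          rw [degreeOf_X]
          exact if_neg fun h => hji h.symm
        simp [this]
    · refine (degreeOf_pow_le _ _ _).trans ?_
      have : degreeOf i (1 : MvPolynomial (Fin n) F) = 0 := by
        rw [← C_1]; exact degreeOf_C _ _
      simp [this]
  · rw [Finset.sum_ite_eq' m.support (Sum.inl i) m]
    split <;> simp

private lemma my_eval_linear {n : ℕ}
    (P : MvPolynomial (Fin n ⊕ (Unit ⊕ Fin n)) F)
    (hlin : P.degreeOf (Sum.inr (Sum.inl ())) ≤ 1) (a : Fin n → F) :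
    ∃ c₁ c₀ : F, ∀ t : F,
      eval (Sum.elim a (Sum.elim (fun _ => t) (fun _ => 0))) P = c₁ * t + c₀ := by
  set w : (Fin n ⊕ (Unit ⊕ Fin n)) → Polynomial F :=
    Sum.elim (fun i => Polynomial.C (a i))
      (Sum.elim (fun _ => Polynomial.X) (fun _ => 0)) with hw
  set u : Polynomial F := aeval w P with hu
  have hevalu : ∀ t : F,
      Polynomial.eval t u = eval (Sum.elim a (Sum.elim (fun _ => t) (fun _ => 0))) P := by
    intro t
    rw [hu, ← Polynomial.coe_aeval_eq_eval, comp_aeval_apply]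
    rw [show (fun v => (Polynomial.aeval t) (w v)) =
      (Sum.elim a (Sum.elim (fun _ => t) (fun _ => (0:F)))) from ?_]
    · rw [← MvPolynomial.coe_aeval_eq_eval]; rfl
    · funext v
      rcases v with j | v
      · simp [hw]
      · rcases v with u' | j <;> simp [hw]
  have hnd : u.natDegree ≤ 1 := by
    rw [hu]
    conv_lhs => rw [P.as_sum, map_sum]
    refine Polynomial.natDegree_sum_le_of_forall_le _ _ fun m hm => ?_
    rw [aeval_monomial]
    refine (Polynomial.natDegree_mul_le).trans ?_
    have h1 : ((algebraMap F (Polynomial F)) (coeff m P)).natDegree = 0 :=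
      Polynomial.natDegree_C _
    rw [h1, zero_add]
    refine le_trans ?_ ((monomial_le_degreeOf _ hm).trans hlin)
    rw [Finsupp.prod]
    refine (Polynomial.natDegree_prod_le _ _).trans ?_
    refine le_trans (Finset.sum_le_sum
      (g := fun v => if v = Sum.inr (Sum.inl ()) then m v else 0) fun v _ => ?_) ?_
    · rcases v with j | v
      · refine (Polynomial.natDegree_pow_le).trans ?_
        simp [hw]
      · rcases v with u' | j
        · refine (Polynomial.natDegree_pow_le).trans ?_
          simp [hw]
        · refine (Polynomial.natDegree_pow_le).trans ?_
          simp [hw]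
    · rw [Finset.sum_ite_eq' m.support (Sum.inr (Sum.inl ())) m]
      split <;> simp
  refine ⟨u.coeff 1, u.coeff 0, fun t => ?_⟩
  rw [← hevalu t]
  conv_lhs => rw [Polynomial.eq_X_add_C_of_natDegree_le_one hnd]
  simp

end Helpers

/-- A `mult-IPS_{Lin'}` refutation `P(x̄, y, z̄)` of the unsatisfiable system
`{f = 0, x_i^2 - x_i = 0}` yields, upon substituting `y := 1, z̄ := 0̄`, the unique
multilinear polynomial `g` with `g(a) * f(a) = 1` on the Boolean hypercube.

Variables are indexed by `Fin n ⊕ Unit ⊕ Fin n` : `Sum.inl i` is `x_i`,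
`Sum.inr (Sum.inl ())` is `y`, and `Sum.inr (Sum.inr i)` is `z_i`. -/
theorem multIPSLin'_refutation_gives_multilinear_inverse
    {F : Type*} [Field F] {n : ℕ} (f : MvPolynomial (Fin n) F)
    (hunsat : ∀ a : Fin n → F, (∀ i, a i ^ 2 = a i) → eval a f ≠ 0)
    (P : MvPolynomial (Fin n ⊕ (Unit ⊕ Fin n)) F)
    -- (i) P is linear in the variable y
    (hlin : P.degreeOf (Sum.inr (Sum.inl ())) ≤ 1)
    -- (ii) P(x̄, 0, 0̄) = 0
    (hzero : aeval (Sum.elim X (fun _ => (0 : MvPolynomial (Fin n) F))) P = 0)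
    -- (iii) P(x̄, y, 0̄) is multilinear (in the variables x̄ and y)
    (hml : ∀ v, MvPolynomial.degreeOf v
        (aeval (Sum.elim (fun i => (X (Sum.inl i) : MvPolynomial (Fin n ⊕ Unit) F))
          (Sum.elim (fun _ => X (Sum.inr ())) (fun _ => 0))) P) ≤ 1)
    -- (iv) P(x̄, f(x̄), x_1^2 - x_1, …, x_n^2 - x_n) = 1
    (hrefut : aeval (Sum.elim X (Sum.elim (fun _ => f)
        (fun i => (X i) ^ 2 - X i))) P = 1) :
    (∀ i, MvPolynomial.degreeOf i
        (aeval (Sum.elim X (Sum.elim (fun _ => (1 : MvPolynomial (Fin n) F))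
          (fun _ => 0))) P) ≤ 1) ∧
    (∀ a : Fin n → F, (∀ i, a i = 0 ∨ a i = 1) →
        eval a (aeval (Sum.elim X (Sum.elim (fun _ => (1 : MvPolynomial (Fin n) F))
          (fun _ => 0))) P) * eval a f = 1) ∧
    (∀ g : MvPolynomial (Fin n) F, (∀ i, g.degreeOf i ≤ 1) →
        (∀ a : Fin n → F, (∀ i, a i = 0 ∨ a i = 1) → eval a g * eval a f = 1) →
        g = aeval (Sum.elim X (Sum.elim (fun _ => (1 : MvPolynomial (Fin n) F))
          (fun _ => 0))) P) := by
  classical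
  set g : MvPolynomial (Fin n) F :=
    aeval (Sum.elim X (Sum.elim (fun _ => (1 : MvPolynomial (Fin n) F))
      (fun _ => 0))) P with hgdef
  -- evaluation of `g`
  have hEg : ∀ a : Fin n → F,
      eval a g = eval (Sum.elim a (Sum.elim (fun _ => (1:F)) (fun _ => 0))) P := by
    intro a
    rw [hgdef, my_eval_aeval]
    have hpt : (fun v : Fin n ⊕ (Unit ⊕ Fin n) => eval a ((Sum.elim X (Sum.elim
        (fun _ => (1 : MvPolynomial (Fin n) F)) fun _ => 0)) v)) =
        Sum.elim a (Sum.elim (fun _ : Unit => (1:F)) fun _ : Fin n => 0) := by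
      funext v
      rcases v with j | v
      · simp
      · rcases v with u | j <;> simp
    rw [hpt]
  -- evaluation at `y = 0`
  have hE0 : ∀ a : Fin n → F,
      eval (Sum.elim a (Sum.elim (fun _ => (0:F)) (fun _ => 0))) P = 0 := by
    intro a
    have h := congrArg (eval a) hzero
    rw [my_eval_aeval, map_zero] at h
    have hpt : (fun v : Fin n ⊕ (Unit ⊕ Fin n) => eval a ((Sum.elim X
        (fun _ : Unit ⊕ Fin n => (0 : MvPolynomial (Fin n) F))) v)) =
        Sum.elim a (Sum.elim (fun _ : Unit => (0:F)) fun _ : Fin n => 0) := by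
      funext v
      rcases v with j | v
      · simp
      · rcases v with u | j <;> simp
    rw [hpt] at h
    exact h
  -- linearity in `y`: eval at `(a, t, 0̄)` equals `t * eval a g`
  have key : ∀ (a : Fin n → F) (t : F),
      eval (Sum.elim a (Sum.elim (fun _ => t) (fun _ => 0))) P = t * eval a g := by
    intro a t
    obtain ⟨c₁, c₀, hc⟩ := my_eval_linear P hlin a
    have hc0 : c₀ = 0 := by
      have := hc 0
      rw [hE0 a] at this
      simpa using this.symm
    have hc1 : c₁ = eval (Sum.elim a (Sum.elim (fun _ => (1:F)) fun _ => 0)) P := by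
      have := hc 1
      rw [hc0, mul_one, add_zero] at this
      exact this.symm
    rw [hc t, hc0, add_zero, hc1, ← hEg a]
    ring
  -- Part 2
  have part2 : ∀ a : Fin n → F, (∀ i, a i = 0 ∨ a i = 1) →
      eval a g * eval a f = 1 := by
    intro a ha
    have h := congrArg (eval a) hrefut
    rw [my_eval_aeval, map_one] at h
    have hpt : (fun v : Fin n ⊕ (Unit ⊕ Fin n) => eval a ((Sum.elim X (Sum.elim (fun _ => f)
        (fun i => (X i) ^ 2 - X i))) v)) =
        Sum.elim a (Sum.elim (fun _ : Unit => eval a f) (fun _ : Fin n => 0)) := by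
      funext v
      rcases v with j | v
      · simp
      · rcases v with u | j
        · simp
        · have : a j ^ 2 = a j := by rcases ha j with h' | h' <;> simp [h']
          simp [this]
    rw [hpt, key a (eval a f)] at h
    rw [mul_comm]
    exact h
  have hdegg : ∀ i, degreeOf i g ≤ 1 := by
    intro i
    set Q : MvPolynomial (Fin n ⊕ Unit) F :=
      aeval (Sum.elim (fun i => (X (Sum.inl i) : MvPolynomial (Fin n ⊕ Unit) F))
        (Sum.elim (fun _ => X (Sum.inr ())) (fun _ => 0))) P with hQdef
    have hgQ : aeval (Sum.elim X fun _ => (1 : MvPolynomial (Fin n) F)) Q = g := by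
      rw [hQdef, comp_aeval_apply]
      have hpt : (fun v : Fin n ⊕ (Unit ⊕ Fin n) =>
          aeval (Sum.elim X fun _ : Unit => (1 : MvPolynomial (Fin n) F))
          ((Sum.elim (fun i => (X (Sum.inl i) : MvPolynomial (Fin n ⊕ Unit) F))
            (Sum.elim (fun _ => X (Sum.inr ())) fun _ => 0)) v)) =
          Sum.elim X (Sum.elim (fun _ : Unit => (1 : MvPolynomial (Fin n) F))
            fun _ : Fin n => 0) := by
        funext v
        rcases v with j | v
        · simp
        · rcases v with u | j <;> simp
      rw [hpt, hgdef]
    calc degreeOf i g = degreeOf i (aeval (Sum.elim X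
            fun _ => (1 : MvPolynomial (Fin n) F)) Q) := by rw [hgQ]
      _ ≤ degreeOf (Sum.inl i) Q := my_degreeOf_aeval_one_le Q i
      _ ≤ 1 := hml (Sum.inl i)
  refine ⟨hdegg, part2, ?_⟩
  · -- Part 3 : uniqueness
    intro g' hdeg' hval'
    have hD : g' - g = 0 := by
      apply my_ml_eval_zero n (g' - g)
      · intro i
        have hneg : degreeOf i (-g) ≤ 1 := by
          have : -g = C (-1 : F) * g := by
            rw [map_neg, C_1]; ring
          rw [this]
          exact (degreeOf_C_mul_le _ _ _).trans (hdegg i)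
        have := degreeOf_add_le i g' (-g)
        rw [sub_eq_add_neg]
        exact this.trans (max_le (hdeg' i) hneg)
      · intro a ha
        have hfa : eval a f ≠ 0 := by
          apply hunsat
          intro i
          rcases ha i with h' | h' <;> simp [h']
        have h1 := hval' a ha
        have h2 := part2 a ha
        have : eval a g' = eval a g := by
          have := h1.trans h2.symm
          exact mul_right_cancel₀ hfa this
        rw [map_sub, this, sub_self]
    have := sub_eq_zero.mp hD
    rw [this]
end

section
/- Let F be a field and f ∈ F[x_1,…,x_n] a multilinear polynomial with f(a) ≠ 0 for every a ∈ {0,1}^n, and let g be the unique multilinear polynomial with g(a)·f(a) = 1 for every a ∈ {0,1}^n. Let m be a multilinear monomial such that supp(m) is not equal to the union ⋃_{m'∈T} supp(m') for any subset T of the set of monomials occurring in f (equivalently, m is not the multilinearization of any product of monomials occurring in f). Then the coefficient of m in g is 0. -/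
open MvPolynomial

/-- Evaluation of a polynomial at a 0/1 indicator vector of a set `B` is the sum of
coefficients of monomials whose support lies in `B`. -/
lemma aux_evalInd {F : Type*} [CommSemiring F] {n : ℕ} (B : Finset (Fin n))
    (p : MvPolynomial (Fin n) F) :
    eval (fun i => if i ∈ B then (1:F) else 0) p
      = ∑ d ∈ p.support.filter (fun d => d.support ⊆ B), p.coeff d := by
  classical
  rw [eval_eq, Finset.sum_filter]
  refine Finset.sum_congr rfl fun d _ => ?_
  by_cases h : d.support ⊆ B
  · rw [if_pos h]
    have : ∏ i ∈ d.support, (if i ∈ B then (1:F) else 0) ^ d i = 1 := by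
      apply Finset.prod_eq_one
      intro i hi
      rw [if_pos (h hi), one_pow]
    rw [this, mul_one]
  · rw [if_neg h]
    obtain ⟨j, hj, hjB⟩ := Finset.not_subset.mp h
    have : ∏ i ∈ d.support, (if i ∈ B then (1:F) else 0) ^ d i = 0 := by
      apply Finset.prod_eq_zero hj
      rw [if_neg hjB, zero_pow (Finsupp.mem_support_iff.mp hj)]
    rw [this, mul_zero]

lemma aux_alt {F : Type*} [Field F] {α : Type*} [DecidableEq α] (s : Finset α) :
    ∑ C ∈ s.powerset, (-1:F)^C.card = if s = ∅ then 1 else 0 := by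
  have h := Finset.sum_powerset_neg_one_pow_card (x := s)
  have h2 := congrArg (fun z : ℤ => (z : F)) h
  simp only [Int.cast_sum, Int.cast_pow, Int.cast_neg, Int.cast_one] at h2
  rw [h2]
  split_ifs <;> simp

lemma aux_inner {F : Type*} [Field F] {α : Type*} [DecidableEq α] (A S : Finset α) :
    ∑ B ∈ S.powerset.filter (fun B => A ⊆ B), (-1:F)^B.card
      = if A = S then (-1:F)^S.card else 0 := by
  classical
  by_cases hAS : A ⊆ S
  · have key : ∑ B ∈ S.powerset.filter (fun B => A ⊆ B), (-1:F)^B.card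
        = ∑ C ∈ (S \ A).powerset, (-1:F)^(A.card + C.card) := by
      refine Finset.sum_nbij' (fun B => B \ A) (fun C => A ∪ C) ?_ ?_ ?_ ?_ ?_
      · intro B hB
        rw [Finset.mem_filter, Finset.mem_powerset] at hB
        rw [Finset.mem_powerset]
        exact Finset.sdiff_subset_sdiff hB.1 (le_refl A)
      · intro C hC
        rw [Finset.mem_powerset] at hC
        rw [Finset.mem_filter, Finset.mem_powerset]
        exact ⟨Finset.union_subset hAS (hC.trans (Finset.sdiff_subset)),
          Finset.subset_union_left⟩
      · intro B hB
        rw [Finset.mem_filter] at hB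
        exact Finset.union_sdiff_of_subset hB.2
      · intro C hC
        rw [Finset.mem_powerset] at hC
        show (A ∪ C) \ A = C
        rw [Finset.union_sdiff_cancel_left]
        exact Finset.disjoint_left.mpr fun a ha hb =>
          (Finset.mem_sdiff.mp (hC hb)).2 ha
      · intro B hB
        rw [Finset.mem_filter] at hB
        congr 1
        rw [← Finset.card_sdiff_add_card_eq_card hB.2, add_comm]
    rw [key]
    simp_rw [pow_add]
    rw [← Finset.mul_sum, aux_alt]
    by_cases h : A = S
    · subst h
      simp
    · rw [if_neg h, if_neg, mul_zero]
      intro he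
      exact h (Finset.Subset.antisymm hAS (Finset.sdiff_eq_empty_iff_subset.mp he))
  · rw [if_neg (fun h => hAS (le_of_eq h))]
    apply Finset.sum_eq_zero
    intro B hB
    rw [Finset.mem_filter, Finset.mem_powerset] at hB
    exact absurd (hB.2.trans hB.1) hAS

/-- Let `f` be multilinear, nonvanishing on the Boolean hypercube, and `g` its
multilinear inverse on the hypercube.  If `m` is a multilinear monomial whose support
is not the union of supports of any subset of the monomials of `f` (i.e. `m` is not the
multilinearization of a product of monomials of `f`), then the coefficient of `m` in `g`
is zero. -/
theorem coeff_multilinear_inverse_eq_zero_of_not_union_of_supports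
    {F : Type*} [Field F] {n : ℕ} (f g : MvPolynomial (Fin n) F)
    (hfml : ∀ i, f.degreeOf i ≤ 1)
    (hf0 : ∀ a : Fin n → F, (∀ i, a i = 0 ∨ a i = 1) → eval a f ≠ 0)
    (hgml : ∀ i, g.degreeOf i ≤ 1)
    (hg : ∀ a : Fin n → F, (∀ i, a i = 0 ∨ a i = 1) → eval a g * eval a f = 1)
    (m : Fin n →₀ ℕ) (hmml : ∀ i, m i ≤ 1)
    (hm : ∀ T : Finset (Fin n →₀ ℕ), T ⊆ f.support →
        m.support ≠ T.biUnion (fun m' => m'.support)) :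
    g.coeff m = 0 := by
  classical
  set S := m.support with hS
  set ind : Finset (Fin n) → (Fin n → F) := fun B i => if i ∈ B then 1 else 0 with hind
  have hbool : ∀ B : Finset (Fin n), ∀ i, ind B i = 0 ∨ ind B i = 1 := by
    intro B i
    by_cases h : i ∈ B
    · right; simp [hind, h]
    · left; simp [hind, h]
  have hGF : ∀ B : Finset (Fin n), eval (ind B) g = (eval (ind B) f)⁻¹ := by
    intro B
    exact eq_inv_of_mul_eq_one_left (hg _ (hbool B))
  set T : F := ∑ B ∈ S.powerset, (-1:F)^B.card * eval (ind B) g with hT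
  -- Claim 1 : T = 0
  have hT0 : T = 0 := by
    set U : Finset (Fin n) :=
      (f.support.filter (fun d => d.support ⊆ S)).biUnion (fun m' => m'.support) with hU
    have hUS : U ⊆ S := by
      apply Finset.biUnion_subset.mpr
      intro d hd
      exact (Finset.mem_filter.mp hd).2
    have hne : S ≠ U := hm _ (Finset.filter_subset _ _)
    obtain ⟨i, hiS, hiU⟩ := Finset.exists_of_ssubset (hUS.ssubset_of_ne (Ne.symm hne))
    have key : ∀ t : Finset (Fin n), t ⊆ S.erase i →
        eval (ind (insert i t)) f = eval (ind t) f := by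
      intro t ht
      rw [hind, aux_evalInd, aux_evalInd]
      congr 1
      apply Finset.filter_congr
      intro d hd
      constructor
      · intro hsub j hj
        rcases Finset.mem_insert.mp (hsub hj) with hji | hjt
        · exfalso
          apply hiU
          rw [hU]
          apply Finset.mem_biUnion.mpr
          refine ⟨d, Finset.mem_filter.mpr ⟨hd, ?_⟩, hji ▸ hj⟩
          exact hsub.trans (Finset.insert_subset hiS (ht.trans (Finset.erase_subset _ _)))
        · exact hjt
      · intro hsub
        exact hsub.trans (Finset.subset_insert _ _)
    have hSi : S = insert i (S.erase i) := (Finset.insert_erase hiS).symm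
    rw [hT, hSi, Finset.sum_powerset_insert (Finset.notMem_erase i S)]
    have : ∀ t ∈ (S.erase i).powerset,
        (-1:F)^t.card * eval (ind t) g
          + (-1:F)^(insert i t).card * eval (ind (insert i t)) g = 0 := by
      intro t ht
      rw [Finset.mem_powerset] at ht
      have hit : i ∉ t := fun h => Finset.notMem_erase i S (ht h)
      rw [Finset.card_insert_of_notMem hit, hGF, hGF, key t ht, pow_succ]
      ring
    rw [← Finset.sum_add_distrib]
    exact Finset.sum_eq_zero this
  -- Claim 2 : T = (-1)^|S| * coeff m g
  have hT2 : T = (-1:F)^S.card * g.coeff m := by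
    rw [hT]
    have step1 : ∀ B : Finset (Fin n), (-1:F)^B.card * eval (ind B) g
        = ∑ d ∈ g.support, (if d.support ⊆ B then (-1:F)^B.card * g.coeff d else 0) := by
      intro B
      rw [hind, aux_evalInd, Finset.mul_sum, Finset.sum_filter]
    simp_rw [step1]
    rw [Finset.sum_comm]
    have step2 : ∀ d : Fin n →₀ ℕ,
        (∑ B ∈ S.powerset, if d.support ⊆ B then (-1:F)^B.card * g.coeff d else 0)
          = g.coeff d * (if d.support = S then (-1:F)^S.card else 0) := by
      intro d
      rw [← aux_inner d.support S, Finset.sum_filter, Finset.mul_sum]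
      refine Finset.sum_congr rfl fun B _ => ?_
      split_ifs <;> ring
    simp_rw [step2]
    rw [Finset.sum_eq_single m]
    · rw [if_pos rfl]; ring
    · intro d hd hdm
      by_cases h : d.support = S
      · exfalso
        apply hdm
        ext j
        have h1 : d j ≤ 1 := le_trans (monomial_le_degreeOf j hd) (hgml j)
        have h2 : m j ≤ 1 := hmml j
        have h3 : d j ≠ 0 ↔ m j ≠ 0 := by
          rw [← Finsupp.mem_support_iff, ← Finsupp.mem_support_iff, h, hS]
        omega
      · rw [if_neg h, mul_zero]
    · intro hmg
      rw [notMem_support_iff.mp hmg, zero_mul]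
  rw [hT0] at hT2
  have hpow : ((-1:F)^S.card) ≠ 0 := pow_ne_zero _ (neg_ne_zero.mpr one_ne_zero)
  exact (mul_eq_zero.mp hT2.symm).resolve_left hpow
end

section
/- Let F be a field and β ∈ F with β ∉ {0, −1} and with f'(a,b) + β ≠ 0 for every Boolean assignment (a,b) ∈ {0,1}^{X∪Y} (this holds, e.g., when char F = 0 and β = 1, and when char F = p > 0 and β lies outside the prime subfield). Let g ∈ F[X,Y] be the unique multilinear polynomial agreeing with 1/(f' + β) on the Boolean hypercube. Then for every i ∈ [N], the family of coefficient polynomials {g_{m_S} : ∅ ≠ S ⊆ X_i} (where g = ∑_{S ⊆ X_i} m_S · g_{m_S} with m_S = ∏_{x∈S} x and g_{m_S} ∈ F[(X∖X_i) ∪ Y]) is algebraically independent over F; in particular alg-rank_{X_i}(g) ≥ n − 1. -/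
/-!
For nonempty `S ⊆ X_i`, the coefficient polynomial `g_{m_S}` is the Möbius transform
`∑_{A ⊆ S} (-1)^{|S \ A|} g|_{X_i = 1_A}`. It is multilinear, so its constant and linear
coefficients are read off from its values at the origin and at the unit vectors; these are
alternating sums of values of `g` at Boolean points, where `g = 1/(f' + β)`. There `f'` vanishes
unless some `y_k` is set, and `y_{t(U)}` only sees the monomial `m_U`, whose value depends on `A`
only through `U ⊆ A`. Möbius inversion then shows that `g_{m_S}` has no constant term and linear
part `((1 + β)⁻¹ - β⁻¹) y_{t(S)}`. Polynomials without constant term whose linear parts are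
nonzero multiples of distinct variables are algebraically independent: under a nontrivial
relation `Q`, the image of a lowest-degree monomial of `Q` keeps a nonzero coefficient.
-/

open MvPolynomial

private lemma sum_two_pow_lt (ℓ : ℕ) : ∑ j ∈ Finset.range ℓ, 2 ^ j < 2 ^ ℓ := by
  induction ℓ with
  | zero => simp
  | succ k ih => rw [Finset.sum_range_succ, pow_succ]; omega

/-- The binary encoding `t(S) = ∑_{j ∈ S} 2^j` of a subset `S ⊆ [ℓ]`, as an element
of `Fin n` where `n = 2^ℓ`. -/
def tEnc {ℓ n : ℕ} (h : n = 2 ^ ℓ) (S : Finset (Fin ℓ)) : Fin n :=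
  ⟨∑ j ∈ S, 2 ^ (j : ℕ), by
    subst h
    calc ∑ j ∈ S, 2 ^ (j : ℕ)
        ≤ ∑ j : Fin ℓ, 2 ^ (j : ℕ) := Finset.sum_le_sum_of_subset (Finset.subset_univ S)
      _ = ∑ j ∈ Finset.range ℓ, 2 ^ j := Fin.sum_univ_eq_sum_range _ _
      _ < 2 ^ ℓ := sum_two_pow_lt ℓ⟩

/-- The polynomial `f' = ∑_{i=1}^{N} ∑_{S ⊆ X_i} (∏_{x ∈ S} x) · y_{t(S)}`.
The x-variables are indexed by pairs `(i, j) : Fin N × Fin ℓ` (block `i`, position `j`)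
and the y-variables by `Fin n`. -/
noncomputable def fPrime (F : Type*) [Field F] (N ℓ n : ℕ) (h : n = 2 ^ ℓ) :
    MvPolynomial ((Fin N × Fin ℓ) ⊕ Fin n) F :=
  ∑ i : Fin N, ∑ S ∈ (Finset.univ : Finset (Fin ℓ)).powerset,
    (∏ j ∈ S, X (Sum.inl (i, j))) * X (Sum.inr (tEnc h S))

/-- Partial evaluation of `g` obtained by substituting, for the variables of block `i`,
the characteristic vector of `A ⊆ X_i`, and leaving every other variable alone. -/
noncomputable def partialEvalBlock {F : Type*} [Field F] {N ℓ n : ℕ}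
    (g : MvPolynomial ((Fin N × Fin ℓ) ⊕ Fin n) F) (i : Fin N) (A : Finset (Fin ℓ)) :
    MvPolynomial ((Fin N × Fin ℓ) ⊕ Fin n) F :=
  aeval (fun v => match v with
    | Sum.inl p => if p.1 = i then (if p.2 ∈ A then 1 else 0) else X (Sum.inl p)
    | Sum.inr k => X (Sum.inr k)) g

/-- For a multilinear `g`, the coefficient polynomial `g_{m_S}` of the monomial
`m_S = ∏_{j ∈ S} x_{i,j}` in the decomposition `g = ∑_{S ⊆ X_i} m_S · g_{m_S}`,
recovered by Möbius inversion over partial Boolean evaluations of block `i`. -/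
noncomputable def coeffPolyBlock {F : Type*} [Field F] {N ℓ n : ℕ}
    (g : MvPolynomial ((Fin N × Fin ℓ) ⊕ Fin n) F) (i : Fin N) (S : Finset (Fin ℓ)) :
    MvPolynomial ((Fin N × Fin ℓ) ⊕ Fin n) F :=
  ∑ A ∈ S.powerset, ((-1 : F) ^ ((S \ A).card)) • partialEvalBlock g i A

open Finset

theorem Finsupp.degree_eq_one_iff {σ : Type*} (x : σ →₀ ℕ) :
    x.degree = 1 ↔ ∃ v, x = single v 1 := by
  refine ⟨fun h => ?_, by rintro ⟨v, rfl⟩; simp⟩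
  obtain ⟨v, hv⟩ := Multiset.card_eq_one.mp
    (by rw [card_toMultiset, ← h, degree_apply]; rfl : Multiset.card (toMultiset x) = 1)
  classical
  exact ⟨v, by rw [← toMultiset_toFinsupp x, hv, Multiset.toFinsupp_singleton]⟩

theorem Finset.sum_powerset_ite_subset_neg_one_pow_card_sdiff {α R : Type*} [DecidableEq α]
    [CommRing R] (S U : Finset α) :
    ∑ A ∈ S.powerset, (if U ⊆ A then (-1 : R) ^ #(S \ A) else 0) = if U = S then 1 else 0 := by
  rw [← sum_filter]
  by_cases hUS : U ⊆ S
  · have hreindex : ∑ A ∈ S.powerset with U ⊆ A, (-1 : R) ^ #(S \ A)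
        = ∑ B ∈ (S \ U).powerset, (-1 : R) ^ #B :=
      sum_nbij' (fun A => S \ A) (fun B => S \ B)
        (by intro A; simp only [mem_filter, mem_powerset]; grind)
        (by intro B; simp only [mem_filter, mem_powerset]; grind)
        (by intro A; simp only [mem_filter, mem_powerset]; grind)
        (by intro B; simp only [mem_powerset]; grind)
        (fun _ _ => rfl)
    have halt := congrArg (Int.cast : ℤ → R) (sum_powerset_neg_one_pow_card (x := S \ U))
    push_cast at halt
    rw [hreindex, halt]
    exact if_congr (sdiff_eq_empty_iff_subset.trans ⟨(hUS.antisymm ·), (·.symm.subset)⟩) rfl rfl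
  · rw [filter_false_of_mem fun A hA hUA => hUS (hUA.trans (mem_powerset.mp hA)), sum_empty,
      if_neg fun h => hUS h.subset]

theorem Finset.sum_powerset_neg_one_pow_card_sdiff_of_nonempty {α R : Type*} [DecidableEq α]
    [CommRing R] {S : Finset α} (hS : S.Nonempty) :
    ∑ A ∈ S.powerset, (-1 : R) ^ #(S \ A) = 0 := by
  simpa [hS.ne_empty.symm] using sum_powerset_ite_subset_neg_one_pow_card_sdiff (R := R) S ∅

theorem Finset.sum_powerset_neg_one_pow_card_sdiff_mul_ite_subset {α R : Type*} [DecidableEq α]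
    [CommRing R] {S : Finset α} (hS : S.Nonempty) (U : Finset α) (x y : R) :
    ∑ A ∈ S.powerset, (-1 : R) ^ #(S \ A) * (if U ⊆ A then x else y)
      = if U = S then x - y else 0 := by
  have hsplit : ∀ A ∈ S.powerset, (-1 : R) ^ #(S \ A) * (if U ⊆ A then x else y)
      = y * (-1 : R) ^ #(S \ A) + (x - y) * (if U ⊆ A then (-1 : R) ^ #(S \ A) else 0) :=
    fun A _ => by split_ifs <;> ring
  rw [sum_congr rfl hsplit, sum_add_distrib, ← mul_sum, ← mul_sum,
    sum_powerset_neg_one_pow_card_sdiff_of_nonempty hS,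
    sum_powerset_ite_subset_neg_one_pow_card_sdiff]
  simp

namespace Ideal

variable {ι A : Type*} [CommRing A] {I : Ideal A}

theorem multiset_prod_map_mem_pow {L : ι → A} (hL : ∀ i, L i ∈ I) (s : Multiset ι) :
    (s.map L).prod ∈ I ^ Multiset.card s := by
  induction s using Multiset.induction_on with
  | empty => simp
  | cons a s ih => simpa [pow_succ'] using mul_mem_mul (hL a) ih

theorem multiset_prod_map_sub_prod_map_mem_pow {p L : ι → A} (hL : ∀ i, L i ∈ I)
    (hpL : ∀ i, p i - L i ∈ I ^ 2) (s : Multiset ι) :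
    (s.map p).prod - (s.map L).prod ∈ I ^ (Multiset.card s + 1) := by
  induction s using Multiset.induction_on with
  | empty => simp
  | cons a s ih =>
    simp only [Multiset.map_cons, Multiset.prod_cons, Multiset.card_cons]
    rw [show p a * (s.map p).prod - L a * (s.map L).prod
        = (p a - L a) * (s.map L).prod + p a * ((s.map p).prod - (s.map L).prod) by ring]
    have hpa : p a ∈ I := by simpa using I.add_mem (pow_le_self two_ne_zero (hpL a)) (hL a)
    refine add_mem ?_ ?_
    · rw [show s.card + 1 + 1 = 2 + s.card by omega, pow_add]
      exact mul_mem_mul (hpL a) (multiset_prod_map_mem_pow hL s)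
    · rw [pow_succ' I (s.card + 1)]
      exact mul_mem_mul hpa ih

theorem finsuppProd_pow_sub_finsuppProd_pow_mem_pow {p L : ι → A} (hL : ∀ i, L i ∈ I)
    (hpL : ∀ i, p i - L i ∈ I ^ 2) (α : ι →₀ ℕ) :
    (α.prod fun i k => p i ^ k) - (α.prod fun i k => L i ^ k) ∈ I ^ (α.degree + 1) := by
  have hprod : ∀ q : ι → A, (α.prod fun i k => q i ^ k) = (α.toMultiset.map q).prod := fun q => by
    rw [Finsupp.toMultiset_map, Finsupp.prod_toMultiset,
      Finsupp.prod_mapDomain_index (fun _ => pow_zero _) (fun _ _ _ => pow_add _ _ _)]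
  have hcard : Multiset.card α.toMultiset = α.degree := by
    rw [Finsupp.card_toMultiset, Finsupp.degree_apply]; rfl
  rw [hprod, hprod, ← hcard]
  exact multiset_prod_map_sub_prod_map_mem_pow hL hpL _

end Ideal

namespace MvPolynomial

theorem mem_idealOfVars_sq_iff {R σ : Type*} [CommSemiring R] (q : MvPolynomial σ R) :
    q ∈ idealOfVars σ R ^ 2 ↔ constantCoeff q = 0 ∧ ∀ v, coeff (Finsupp.single v 1) q = 0 := by
  rw [mem_pow_idealOfVars_iff']
  refine ⟨fun h => ⟨by simpa [constantCoeff_eq] using h 0 (by simp), fun v => h _ (by simp)⟩, ?_⟩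
  rintro ⟨h0, h1⟩ x hx
  obtain hx0 | hx1 : x.degree = 0 ∨ x.degree = 1 := by omega
  · rw [Finsupp.degree_eq_zero_iff] at hx0
    simpa [hx0, constantCoeff_eq] using h0
  · obtain ⟨v, rfl⟩ := (Finsupp.degree_eq_one_iff x).mp hx1
    exact h1 v

theorem finsuppProd_C_mul_X_pow {ι R σ : Type*} [CommSemiring R] (τ : ι → σ) (c : ι → R)
    (α : ι →₀ ℕ) :
    (α.prod fun i k => (C (c i) * X (τ i) : MvPolynomial σ R) ^ k)
      = monomial (α.mapDomain τ) (α.prod fun i k => c i ^ k) := by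
  rw [monomial_eq, Finsupp.prod_mapDomain_index (fun _ => pow_zero _) (fun _ _ _ => pow_add _ _ _)]
  simp [mul_pow, Finsupp.prod_mul, map_finsuppProd]

theorem algebraicIndependent_of_sub_C_mul_X_mem_idealOfVars_sq {ι R σ : Type*} [CommRing R]
    [IsDomain R] {τ : ι → σ} (hτ : Function.Injective τ) {c : ι → R} (hc : ∀ i, c i ≠ 0)
    {p : ι → MvPolynomial σ R} (hp : ∀ i, p i - C (c i) * X (τ i) ∈ idealOfVars σ R ^ 2) :
    AlgebraicIndependent R p := by
  classical
  rw [algebraicIndependent_iff]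
  intro Q hQ
  by_contra hQ0
  obtain ⟨α₀, hα₀, hmin⟩ := Q.support.exists_min_image Finsupp.degree (support_nonempty.mpr hQ0)
  -- Up to terms of degree `> α.degree ≥ α₀.degree`, `p^α` is the monomial `c^α X^(τ α)`.
  have hcoeff : ∀ α ∈ Q.support, coeff (α₀.mapDomain τ) (α.prod fun i k => p i ^ k)
      = if α = α₀ then α₀.prod (fun i k => c i ^ k) else 0 := by
    intro α hα
    have hlow := Ideal.finsuppProd_pow_sub_finsuppProd_pow_mem_pow (I := idealOfVars σ R)
      (fun i => Ideal.mul_mem_left _ _ (Ideal.subset_span ⟨τ i, rfl⟩)) hp α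
    rw [mem_pow_idealOfVars_iff'] at hlow
    have := hlow (α₀.mapDomain τ) (by rw [Finsupp.degree_mapDomain]; have := hmin α hα; omega)
    rw [coeff_sub, sub_eq_zero, finsuppProd_C_mul_X_pow, coeff_monomial] at this
    rw [this]
    by_cases h : α = α₀
    · simp [h]
    · simp [h, (Finsupp.mapDomain_injective hτ).eq_iff]
  have hlowest : coeff (α₀.mapDomain τ) (aeval p Q) = coeff α₀ Q * α₀.prod fun i k => c i ^ k := by
    conv_lhs => rw [Q.as_sum]
    simp only [map_sum, aeval_monomial, coeff_sum, algebraMap_eq, coeff_C_mul]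
    rw [sum_congr rfl fun α hα => by rw [hcoeff α hα]]
    simp [hα₀]
  rw [hQ, coeff_zero] at hlowest
  exact mul_ne_zero (mem_support_iff.mp hα₀)
    (Finsupp.prod_ne_zero_iff.mpr fun i _ => pow_ne_zero _ (hc i)) hlowest.symm

theorem degreeOf_aeval_le {R σ τ : Type*} [CommSemiring R] [DecidableEq σ]
    {φ : σ → MvPolynomial τ R} {u : σ} {v : τ}
    (hφ : ∀ w, degreeOf v (φ w) ≤ if w = u then 1 else 0) (p : MvPolynomial σ R) :
    degreeOf v (aeval φ p) ≤ degreeOf u p := by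
  conv_lhs => rw [p.as_sum, map_sum]
  refine (degreeOf_sum_le _ _ _).trans (Finset.sup_le fun m hm => ?_)
  rw [aeval_monomial, algebraMap_eq]
  refine (degreeOf_C_mul_le _ _ _).trans ((degreeOf_prod_le _ _ _).trans ?_)
  calc ∑ w ∈ m.support, degreeOf v (φ w ^ m w)
      ≤ ∑ w ∈ m.support, if w = u then m w else 0 := by
        refine sum_le_sum fun w _ => (degreeOf_pow_le _ _ _).trans ?_
        have := Nat.mul_le_mul_left (m w) (hφ w)
        split_ifs at this ⊢ <;> simpa using this
    _ ≤ m u := by rw [sum_ite_eq']; split_ifs <;> simp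
    _ ≤ degreeOf u p := monomial_le_degreeOf u hm

theorem eval_piSingle_one_of_degreeOf_le_one {R σ : Type*} [CommSemiring R] [DecidableEq σ]
    {p : MvPolynomial σ R} {v : σ} (hp : degreeOf v p ≤ 1) :
    eval (Pi.single v 1) p = constantCoeff p + coeff (Finsupp.single v 1) p := by
  have hmon : ∀ m ∈ p.support, ∏ w ∈ m.support, (Pi.single v 1 : σ → R) w ^ m w
      = if m = 0 ∨ m = Finsupp.single v 1 then 1 else 0 := by
    intro m hm
    rw [prod_congr rfl fun w hw => (by
      rw [Pi.single_apply]; split_ifs <;> simp [Finsupp.mem_support_iff.mp hw] :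
        (Pi.single v 1 : σ → R) w ^ m w = if w = v then 1 else 0), prod_boole]
    refine if_congr ⟨fun h => ?_, ?_⟩ rfl rfl
    · have hm1 : m v ≤ 1 := (monomial_le_degreeOf v hm).trans hp
      rw [Finsupp.support_subset_singleton.mp (fun w hw => mem_singleton.mpr (h w hw))]
      interval_cases m v <;> simp
    · rintro (rfl | rfl) w hw <;> simp_all
  have hne : (0 : σ →₀ ℕ) ≠ Finsupp.single v 1 := by simp [eq_comm]
  rw [eval_eq, sum_congr rfl fun m hm => by rw [hmon m hm]]
  simp only [mul_ite, mul_one, mul_zero]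
  rw [← sum_filter, sum_subset (s₂ := {0, Finsupp.single v 1}) ?_ ?_, sum_pair hne,
    constantCoeff_eq]
  · intro m
    simp
  · intro m _ hm
    simp_all

end MvPolynomial

theorem tEnc_injective {ℓ n : ℕ} (hn : n = 2 ^ ℓ) : Function.Injective (tEnc hn) := by
  intro S T hST
  have hsum : ∑ j ∈ S.image Fin.val, 2 ^ j = ∑ j ∈ T.image Fin.val, 2 ^ j := by
    rw [sum_image (fun _ _ _ _ h => Fin.val_injective h),
      sum_image (fun _ _ _ _ h => Fin.val_injective h)]
    exact congrArg Fin.val hST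
  have := congrArg (fun m => (Nat.bitIndices m).toFinset) hsum
  simp only [toFinset_bitIndices_sum_two_pow] at this
  exact image_injective Fin.val_injective this

theorem tEnc_surjective {ℓ n : ℕ} (hn : n = 2 ^ ℓ) : Function.Surjective (tEnc hn) :=
  ((Fintype.bijective_iff_injective_and_card _).mpr
    ⟨tEnc_injective hn, by simp [Fintype.card_finset, hn]⟩).surjective

section fPrime

variable {F : Type*} [Field F] {ℓ N n : ℕ} (hn : n = 2 ^ ℓ)

theorem eval_fPrime (a : (Fin N × Fin ℓ) ⊕ Fin n → F) :
    eval a (fPrime F N ℓ n hn) = ∑ i, ∑ T ∈ univ.powerset,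
      (∏ j ∈ T, a (.inl (i, j))) * a (.inr (tEnc hn T)) := by
  simp [fPrime]

theorem eval_fPrime_of_forall_inr_eq_zero {a : (Fin N × Fin ℓ) ⊕ Fin n → F}
    (ha : ∀ k, a (.inr k) = 0) : eval a (fPrime F N ℓ n hn) = 0 := by
  simp [eval_fPrime, ha]

theorem eval_fPrime_of_forall_inr_eq_ite {a : (Fin N × Fin ℓ) ⊕ Fin n → F}
    {U : Finset (Fin ℓ)} (ha : ∀ k, a (.inr k) = if k = tEnc hn U then 1 else 0) :
    eval a (fPrime F N ℓ n hn) = ∑ i, ∏ j ∈ U, a (.inl (i, j)) := by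
  simp [eval_fPrime, ha, (tEnc_injective hn).eq_iff]

end fPrime

section coeffPolyBlock

variable {F : Type*} [Field F] {ℓ N n : ℕ}

def setBlock (i : Fin N) (A : Finset (Fin ℓ)) (a : (Fin N × Fin ℓ) ⊕ Fin n → F) :
    (Fin N × Fin ℓ) ⊕ Fin n → F :=
  Sum.elim (fun p => if p.1 = i then if p.2 ∈ A then 1 else 0 else a (.inl p)) (a ∘ .inr)

theorem setBlock_mem_zero_one {i : Fin N} {A : Finset (Fin ℓ)} {a : (Fin N × Fin ℓ) ⊕ Fin n → F}
    (ha : ∀ v, a v = 0 ∨ a v = 1) (v : (Fin N × Fin ℓ) ⊕ Fin n) :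
    setBlock i A a v = 0 ∨ setBlock i A a v = 1 := by
  rcases v with p | k
  · by_cases hp : p.1 = i <;> by_cases hA : p.2 ∈ A <;> simp [setBlock, hp, hA, ha]
  · exact ha _

theorem eval_partialEvalBlock (g : MvPolynomial ((Fin N × Fin ℓ) ⊕ Fin n) F) (i : Fin N)
    (A : Finset (Fin ℓ)) (a : (Fin N × Fin ℓ) ⊕ Fin n → F) :
    eval a (partialEvalBlock g i A) = eval (setBlock i A a) g := by
  rw [partialEvalBlock, aeval_eq_bind₁, eval, eval₂Hom_bind₁]
  refine congrArg (fun x => eval x g) (funext fun v => ?_)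
  rcases v with p | k <;> simp [setBlock, apply_ite (eval a)]

theorem eval_coeffPolyBlock (g : MvPolynomial ((Fin N × Fin ℓ) ⊕ Fin n) F) (i : Fin N)
    (S : Finset (Fin ℓ)) (a : (Fin N × Fin ℓ) ⊕ Fin n → F) :
    eval a (coeffPolyBlock g i S)
      = ∑ A ∈ S.powerset, (-1) ^ #(S \ A) * eval (setBlock i A a) g := by
  simp [coeffPolyBlock, eval_partialEvalBlock]

theorem degreeOf_coeffPolyBlock_le_one {g : MvPolynomial ((Fin N × Fin ℓ) ⊕ Fin n) F}
    (hg : ∀ v, g.degreeOf v ≤ 1) (i : Fin N) (S : Finset (Fin ℓ)) (v : (Fin N × Fin ℓ) ⊕ Fin n) :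
    degreeOf v (coeffPolyBlock g i S) ≤ 1 := by
  refine (degreeOf_sum_le _ _ _).trans (Finset.sup_le fun A _ => ?_)
  rw [smul_eq_C_mul]
  refine (degreeOf_C_mul_le _ _ _).trans ((degreeOf_aeval_le (fun w => ?_) g).trans (hg v))
  have hX : ∀ w, degreeOf v (X w : MvPolynomial _ F) ≤ if w = v then 1 else 0 := fun w => by
    rw [degreeOf_X]
    split_ifs <;> simp_all
  rcases w with p | k
  · by_cases hp : p.1 = i
    · simp only [hp, if_true]
      split_ifs <;> simp
    · simpa [hp] using hX _
  · exact hX _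

variable (hn : n = 2 ^ ℓ)

theorem eval_fPrime_setBlock_piSingle_inr (i : Fin N) (A U : Finset (Fin ℓ)) :
    eval (setBlock i A (Pi.single (.inr (tEnc hn U)) 1)) (fPrime F N ℓ n hn)
      = if U ⊆ A then (if U = ∅ then (N : F) else 1) else 0 := by
  rw [eval_fPrime_of_forall_inr_eq_ite hn (U := U) (fun k => by simp [setBlock, Pi.single_apply])]
  simp only [setBlock, Sum.elim_inl, Pi.single_apply, reduceCtorEq, if_false]
  rcases U.eq_empty_or_nonempty with rfl | hU
  · simp
  · simp [hU.ne_empty, prod_boole, subset_iff]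

variable {β : F} {g : MvPolynomial ((Fin N × Fin ℓ) ⊕ Fin n) F} {i : Fin N} {S : Finset (Fin ℓ)}

theorem eval_coeffPolyBlock_of_mem_zero_one
    (hg : ∀ a : ((Fin N × Fin ℓ) ⊕ Fin n) → F, (∀ v, a v = 0 ∨ a v = 1) →
        eval a g * (eval a (fPrime F N ℓ n hn) + β) = 1)
    {a : (Fin N × Fin ℓ) ⊕ Fin n → F} (ha : ∀ v, a v = 0 ∨ a v = 1) :
    eval a (coeffPolyBlock g i S) = ∑ A ∈ S.powerset,
      (-1) ^ #(S \ A) * (eval (setBlock i A a) (fPrime F N ℓ n hn) + β)⁻¹ := by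
  rw [eval_coeffPolyBlock]
  exact sum_congr rfl fun A _ => by
    rw [eq_inv_of_mul_eq_one_left (hg _ (setBlock_mem_zero_one ha))]

theorem eval_coeffPolyBlock_of_forall_inr_eq_zero
    (hg : ∀ a : ((Fin N × Fin ℓ) ⊕ Fin n) → F, (∀ v, a v = 0 ∨ a v = 1) →
        eval a g * (eval a (fPrime F N ℓ n hn) + β) = 1)
    (hS : S.Nonempty) {a : (Fin N × Fin ℓ) ⊕ Fin n → F} (ha : ∀ v, a v = 0 ∨ a v = 1)
    (hy : ∀ k, a (.inr k) = 0) : eval a (coeffPolyBlock g i S) = 0 := by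
  rw [eval_coeffPolyBlock_of_mem_zero_one hn hg ha]
  simp only [eval_fPrime_of_forall_inr_eq_zero hn (a := setBlock i _ a) hy, zero_add, ← sum_mul,
    sum_powerset_neg_one_pow_card_sdiff_of_nonempty hS, zero_mul]

theorem constantCoeff_coeffPolyBlock
    (hg : ∀ a : ((Fin N × Fin ℓ) ⊕ Fin n) → F, (∀ v, a v = 0 ∨ a v = 1) →
        eval a g * (eval a (fPrime F N ℓ n hn) + β) = 1)
    (hS : S.Nonempty) : constantCoeff (coeffPolyBlock g i S) = 0 := by
  rw [← eval_zero]
  exact eval_coeffPolyBlock_of_forall_inr_eq_zero hn hg hS (fun _ => .inl rfl) fun _ => rfl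

theorem coeff_single_coeffPolyBlock (hgml : ∀ v, g.degreeOf v ≤ 1)
    (hg : ∀ a : ((Fin N × Fin ℓ) ⊕ Fin n) → F, (∀ v, a v = 0 ∨ a v = 1) →
        eval a g * (eval a (fPrime F N ℓ n hn) + β) = 1)
    (hS : S.Nonempty) (v : (Fin N × Fin ℓ) ⊕ Fin n) :
    coeff (Finsupp.single v 1) (coeffPolyBlock g i S)
      = if v = .inr (tEnc hn S) then (1 + β)⁻¹ - β⁻¹ else 0 := by
  have hlin := eval_piSingle_one_of_degreeOf_le_one (degreeOf_coeffPolyBlock_le_one hgml i S v)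
  rw [constantCoeff_coeffPolyBlock hn hg hS, zero_add] at hlin
  have hv : ∀ w, (Pi.single v 1 : (Fin N × Fin ℓ) ⊕ Fin n → F) w = 0 ∨
      (Pi.single v 1 : (Fin N × Fin ℓ) ⊕ Fin n → F) w = 1 := fun w => by
    by_cases h : w = v <;> simp [h]
  rw [← hlin]
  rcases v with u | k
  · rw [eval_coeffPolyBlock_of_forall_inr_eq_zero hn hg hS hv fun k => by simp]
    simp
  · obtain ⟨U, rfl⟩ := tEnc_surjective hn k
    rw [eval_coeffPolyBlock_of_mem_zero_one hn hg hv]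
    simp only [eval_fPrime_setBlock_piSingle_inr, apply_ite (· + β), zero_add, apply_ite Inv.inv]
    rw [sum_powerset_neg_one_pow_card_sdiff_mul_ite_subset hS]
    by_cases hUS : U = S
    · simp [hUS, hS.ne_empty]
    · simp [hUS, (tEnc_injective hn).eq_iff]

end coeffPolyBlock

theorem algIndep_coeffs_of_multilinear_inverse_fPrime_general
    {F : Type*} [Field F] (ℓ N n : ℕ) (hn : n = 2 ^ ℓ)
    (β : F)
    (g : MvPolynomial ((Fin N × Fin ℓ) ⊕ Fin n) F)
    (hgml : ∀ v, g.degreeOf v ≤ 1)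
    (hg : ∀ a : ((Fin N × Fin ℓ) ⊕ Fin n) → F, (∀ v, a v = 0 ∨ a v = 1) →
        eval a g * (eval a (fPrime F N ℓ n hn) + β) = 1)
    (i : Fin N) :
    AlgebraicIndependent F
      (fun S : {S : Finset (Fin ℓ) // S.Nonempty} => coeffPolyBlock g i S.val) := by
  have hc : (1 + β)⁻¹ - β⁻¹ ≠ 0 := sub_ne_zero.mpr (inv_injective.ne (by simp))
  refine algebraicIndependent_of_sub_C_mul_X_mem_idealOfVars_sq
    (τ := fun S => .inr (tEnc hn S.1)) (c := fun _ => (1 + β)⁻¹ - β⁻¹)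
    (fun S T h => Subtype.ext (tEnc_injective hn (Sum.inr_injective h))) (fun _ => hc)
    fun S => (mem_idealOfVars_sq_iff _).mpr ⟨?_, fun v => ?_⟩
  · simp [constantCoeff_coeffPolyBlock hn hg S.2]
  · simp only [coeff_sub, coeff_single_coeffPolyBlock hn hgml hg S.2, coeff_C_mul, coeff_X,
      Finsupp.single_left_inj one_ne_zero, eq_comm (a := Sum.inr _)]
    split_ifs <;> simp

/-- For the unique multilinear polynomial `g` agreeing with `1/(f' + β)` on the Boolean
hypercube, the coefficient polynomials `{g_{m_S} : ∅ ≠ S ⊆ X_i}` are algebraically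
independent over `F` (there are `n - 1` of them, so `alg-rank_{X_i}(g) ≥ n - 1`). -/
theorem algIndep_coeffs_of_multilinear_inverse_fPrime
    {F : Type*} [Field F] (ℓ N n : ℕ) (hn : n = 2 ^ ℓ) (hN : N * ℓ = n)
    (β : F) (hβ0 : β ≠ 0) (hβ1 : β ≠ -1)
    (hunsat : ∀ a : ((Fin N × Fin ℓ) ⊕ Fin n) → F, (∀ v, a v = 0 ∨ a v = 1) →
        eval a (fPrime F N ℓ n hn) + β ≠ 0)
    (g : MvPolynomial ((Fin N × Fin ℓ) ⊕ Fin n) F)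
    (hgml : ∀ v, g.degreeOf v ≤ 1)
    (hg : ∀ a : ((Fin N × Fin ℓ) ⊕ Fin n) → F, (∀ v, a v = 0 ∨ a v = 1) →
        eval a g * (eval a (fPrime F N ℓ n hn) + β) = 1)
    (i : Fin N) :
    AlgebraicIndependent F
      (fun S : {S : Finset (Fin ℓ) // S.Nonempty} => coeffPolyBlock g i S.val) :=
  algIndep_coeffs_of_multilinear_inverse_fPrime_general ℓ N n hn β g hgml hg i
end

section
/- Let F be a field and β ∈ F with β ∉ {0, −1} and with h'(a,b) + β ≠ 0 for every Boolean assignment (a,b) ∈ {0,1}^{X∪Y} (this holds, e.g., when char F = 0 and β = 1, and when char F = p > 0 and β lies outside the prime subfield). Let g ∈ F[X,Y] be the unique multilinear polynomial agreeing with 1/(h' + β) on the Boolean hypercube. Then for every k ∈ [n^{2(1−1/c)}/c], the family of coefficient polynomials {g_m : m a set-multilinear monomial over X^{(k)}} (where g = ∑_m m·g_m over monomials m in the X^{(k)}-variables, g_m ∈ F[(X∖X^{(k)}) ∪ Y]) consists of n² algebraically independent polynomials over F; in particular alg-rank_{X^{(k)}}(g) ≥ n². -/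
/-!
Setting every x-variable to zero sends the coefficient `g_m` of a set-multilinear monomial `m`
over `X^{(k)}` to `((β + 1)⁻¹ - β⁻¹) · π_k(m)`. Both sides are multilinear, so it suffices to
compare them on Boolean points `y`. By Möbius inversion, the left side there is the alternating
sum of `1 / (h' + β)` over the points where the block `X^{(k)}` is the indicator of a subset of
the variables of `m` and all other x-variables vanish; `h'` is zero at all of these points except
at `m` itself, where it equals `y(π_k(m))`. Since the `π_k(m)` are distinct variables and
`(β + 1)⁻¹ ≠ β⁻¹`, the specialized family, hence the family `g_m`, is algebraically independent.
-/

open MvPolynomial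

/-- The polynomial `h' = ∑_k h_k`, where `h_k = ∑_m m · π_k(m)` sums over all
set-multilinear monomials `m` over `X^{(k)} = X_{1,k} ⊔ ⋯ ⊔ X_{c,k}`.
The x-variables are indexed by triples `(i, k, j) : Fin c × Fin K × Fin a`
(row `i`, block `k`, position `j`, with `a = n^{2/c}` the block size and
`K = n^{2(1-1/c)}/c` the number of blocks), and the y-variables by `Fin m × Fin m`
(with `m = n`, so `|Y| = n²`).  A set-multilinear monomial over `X^{(k)}` is encoded by
a function `τ : Fin c → Fin a` picking one variable from each row, and `π k` is the
given bijection from these monomials to `Y`. -/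
noncomputable def hPrime (F : Type*) [Field F] (c K a m : ℕ)
    (π : Fin K → ((Fin c → Fin a) ≃ (Fin m × Fin m))) :
    MvPolynomial ((Fin c × Fin K × Fin a) ⊕ (Fin m × Fin m)) F :=
  ∑ k : Fin K, ∑ τ : Fin c → Fin a,
    (∏ i : Fin c, X (Sum.inl (i, k, τ i))) * X (Sum.inr (π k τ))

/-- Partial evaluation of `g` obtained by substituting, for the variables of block
`X^{(k)}`, the characteristic vector of `A ⊆ Fin c × Fin a`, and leaving every other
variable alone. -/
noncomputable def partialEvalBlockK {F : Type*} [Field F] {c K a m : ℕ}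
    (g : MvPolynomial ((Fin c × Fin K × Fin a) ⊕ (Fin m × Fin m)) F)
    (k : Fin K) (A : Finset (Fin c × Fin a)) :
    MvPolynomial ((Fin c × Fin K × Fin a) ⊕ (Fin m × Fin m)) F :=
  aeval (fun v => match v with
    | Sum.inl p => if p.2.1 = k then (if (p.1, p.2.2) ∈ A then 1 else 0)
        else X (Sum.inl p)
    | Sum.inr y => X (Sum.inr y)) g

/-- For a multilinear `g`, the coefficient polynomial `g_m` of the set-multilinear
monomial `m = ∏_i x_{i,k,τ(i)}` in the decomposition of `g` over monomials in the
`X^{(k)}`-variables, recovered by Möbius inversion over partial Boolean evaluations. -/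
noncomputable def coeffPolySM {F : Type*} [Field F] {c K a m : ℕ}
    (g : MvPolynomial ((Fin c × Fin K × Fin a) ⊕ (Fin m × Fin m)) F)
    (k : Fin K) (τ : Fin c → Fin a) :
    MvPolynomial ((Fin c × Fin K × Fin a) ⊕ (Fin m × Fin m)) F :=
  ∑ A ∈ (Finset.univ.image (fun i : Fin c => (i, τ i))).powerset,
    ((-1 : F) ^ (((Finset.univ.image (fun i : Fin c => (i, τ i))) \ A).card)) •
      partialEvalBlockK g k A

open Finset

namespace MvPolynomial

variable {σ R : Type*} [CommRing R]

theorem degreeOf_aeval_le_s6 (f : σ → MvPolynomial σ R) (p : MvPolynomial σ R) (v : σ)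
    (hfv : (f v).degreeOf v ≤ 1) (hf : ∀ w ≠ v, (f w).degreeOf v = 0) :
    (aeval f p).degreeOf v ≤ p.degreeOf v := by
  conv_lhs => rw [p.as_sum, map_sum]
  refine (degreeOf_sum_le _ _ _).trans (Finset.sup_le fun s hs => ?_)
  rw [aeval_monomial, algebraMap_eq]
  refine (degreeOf_C_mul_le _ _ _).trans ?_
  calc (s.prod fun w e => f w ^ e).degreeOf v
      ≤ ∑ w ∈ s.support, (f w ^ s w).degreeOf v := degreeOf_prod_le _ _ _
    _ ≤ ∑ w ∈ s.support, s w * (f w).degreeOf v :=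
        Finset.sum_le_sum fun w _ => degreeOf_pow_le _ _ _
    _ ≤ s v := by
        rw [Finset.sum_eq_single v (fun w _ hw => by rw [hf w hw, mul_zero])
          (fun hv => by rw [Finsupp.notMem_support_iff.mp hv, zero_mul])]
        exact (Nat.mul_le_mul_left _ hfv).trans_eq (mul_one _)
    _ ≤ p.degreeOf v := by
        rw [degreeOf_eq_sup]
        exact Finset.le_sup (f := fun s => s v) hs

theorem eq_of_degreeOf_le_one_of_eval_eq [IsDomain R] [Finite σ] {p q : MvPolynomial σ R}
    (hp : ∀ i, p.degreeOf i ≤ 1) (hq : ∀ i, q.degreeOf i ≤ 1)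
    (h : ∀ x : σ → R, (∀ i, x i = 0 ∨ x i = 1) → eval x p = eval x q) : p = q := by
  classical
  refine sub_eq_zero.mp (eq_zero_of_eval_zero_at_prod_finset _ (fun _ => {0, 1}) (fun i => ?_)
    fun x hx => ?_)
  · rw [card_pair zero_ne_one]
    exact (degreeOf_sub_le i p q).trans_lt (by grind)
  · simp only [mem_insert, mem_singleton] at hx
    rw [map_sub, h x hx, sub_self]

theorem eval_aeval {τ : Type*} (x : τ → R) (f : σ → MvPolynomial τ R) (p : MvPolynomial σ R) :
    eval x (aeval f p) = eval (fun i => eval x (f i)) p :=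
  eval₂Hom_bind₁ _ _ _ _

theorem algebraicIndependent_C_mul_X {K : Type*} [Field K] {c : K} (hc : c ≠ 0) :
    AlgebraicIndependent K (fun i => C c * X i : σ → MvPolynomial σ K) := by
  refine AlgebraicIndependent.of_comp (aeval fun i => C c⁻¹ * X i) ?_
  convert algebraicIndependent_X σ K using 1
  ext1 i
  simp [← mul_assoc, ← C_mul, hc]

end MvPolynomial

namespace Finset

theorem sum_powerset_neg_one_pow_card_sdiff {ι R : Type*} [DecidableEq ι] [CommRing R]
    {s : Finset ι} (hs : s.Nonempty) : ∑ t ∈ s.powerset, (-1 : R) ^ #(s \ t) = 0 := by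
  have h := prod_add (fun _ => (1 : R)) (fun _ => -1) s
  simp only [add_neg_cancel, prod_const, zero_pow hs.card_ne_zero, one_pow, one_mul] at h
  exact h.symm

theorem sum_powerset_neg_one_pow_card_sdiff_mul_ite {ι R : Type*} [DecidableEq ι] [CommRing R]
    {s : Finset ι} (hs : s.Nonempty) (u v : R) :
    ∑ t ∈ s.powerset, (-1 : R) ^ #(s \ t) * (if t = s then u else v) = u - v := by
  have hsplit : ∀ t, (if t = s then u else v) = v + if t = s then u - v else 0 := by
    intro t; split_ifs <;> ring
  simp only [hsplit, mul_add, sum_add_distrib, ← sum_mul, sum_powerset_neg_one_pow_card_sdiff hs,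
    zero_mul, zero_add, mul_ite, mul_zero, sum_ite_eq', mem_powerset_self, if_true, sdiff_self,
    bot_eq_empty, card_empty, pow_zero, one_mul]

end Finset

section Blocks

variable {F : Type*} [Field F] {c K a m : ℕ}

abbrev HVar (c K a m : ℕ) : Type := (Fin c × Fin K × Fin a) ⊕ (Fin m × Fin m)

def graphFinset (τ : Fin c → Fin a) : Finset (Fin c × Fin a) :=
  univ.image fun i => (i, τ i)

def blockIndicator (k : Fin K) (A : Finset (Fin c × Fin a)) (x : HVar c K a m → F) :
    HVar c K a m → F
  | Sum.inl p => if p.2.1 = k then if (p.1, p.2.2) ∈ A then 1 else 0 else x (Sum.inl p)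
  | Sum.inr y => x (Sum.inr y)

noncomputable def xToZero :
    MvPolynomial (HVar c K a m) F →ₐ[F] MvPolynomial (HVar c K a m) F :=
  aeval (Sum.elim 0 (X ∘ Sum.inr))

theorem blockIndicator_boolean (k : Fin K) (A : Finset (Fin c × Fin a)) {x : HVar c K a m → F}
    (hx : ∀ v, x v = 0 ∨ x v = 1) (v : HVar c K a m) :
    blockIndicator k A x v = 0 ∨ blockIndicator k A x v = 1 := by
  rcases v with p | y
  · simp only [blockIndicator]; split_ifs <;> simp [hx]
  · exact hx _

theorem eval_partialEvalBlockK (g : MvPolynomial (HVar c K a m) F) (k : Fin K)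
    (A : Finset (Fin c × Fin a)) (x : HVar c K a m → F) :
    eval x (partialEvalBlockK g k A) = eval (blockIndicator k A x) g := by
  rw [partialEvalBlockK, eval_aeval]
  congr 2
  funext v
  rcases v with p | y
  · simp only [blockIndicator]; split_ifs <;> simp
  · simp [blockIndicator]

theorem degreeOf_partialEvalBlockK_le (g : MvPolynomial (HVar c K a m) F) (k : Fin K)
    (A : Finset (Fin c × Fin a)) (v : HVar c K a m) :
    (partialEvalBlockK g k A).degreeOf v ≤ g.degreeOf v := by
  classical
  refine degreeOf_aeval_le_s6 _ _ _ ?_ fun w hw => ?_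
  · rcases v with p | y
    · simp only; split_ifs <;> simp
    · simp
  · rcases w with p | y
    · simp only; split_ifs <;> simp [degreeOf_X_of_ne hw.symm]
    · simp [degreeOf_X_of_ne hw.symm]

theorem eval_coeffPolySM (g : MvPolynomial (HVar c K a m) F) (k : Fin K) (τ : Fin c → Fin a)
    (x : HVar c K a m → F) :
    eval x (coeffPolySM g k τ) = ∑ A ∈ (graphFinset τ).powerset,
      (-1 : F) ^ #(graphFinset τ \ A) * eval (blockIndicator k A x) g := by
  simp only [coeffPolySM, map_sum, smul_eval, eval_partialEvalBlockK, graphFinset]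

theorem degreeOf_coeffPolySM_le (g : MvPolynomial (HVar c K a m) F) (k : Fin K)
    (τ : Fin c → Fin a) (v : HVar c K a m) : (coeffPolySM g k τ).degreeOf v ≤ g.degreeOf v := by
  refine (degreeOf_sum_le _ _ _).trans (Finset.sup_le fun A _ => ?_)
  rw [smul_eq_C_mul]
  exact (degreeOf_C_mul_le _ _ _).trans (degreeOf_partialEvalBlockK_le g k A v)

theorem eval_xToZero (p : MvPolynomial (HVar c K a m) F) (b : HVar c K a m → F) :
    eval b (xToZero p) = eval (Sum.elim 0 (b ∘ Sum.inr)) p := by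
  rw [xToZero, eval_aeval]
  congr 2
  funext v
  rcases v with p | y <;> simp

theorem degreeOf_xToZero_le (p : MvPolynomial (HVar c K a m) F) (v : HVar c K a m) :
    (xToZero p).degreeOf v ≤ p.degreeOf v := by
  refine degreeOf_aeval_le_s6 _ _ _ ?_ fun w hw => ?_
  · rcases v with p | y <;> simp
  · rcases w with p | y
    · simp
    · simp [degreeOf_X_of_ne hw.symm]

theorem forall_mem_iff_of_subset_graphFinset {τ τ' : Fin c → Fin a} {A : Finset (Fin c × Fin a)}
    (hA : A ⊆ graphFinset τ) : (∀ i, (i, τ' i) ∈ A) ↔ τ' = τ ∧ A = graphFinset τ := by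
  constructor
  · intro hall
    have hτ : τ' = τ := funext fun i => by
      obtain ⟨j, -, hj⟩ := mem_image.mp (hA (hall i))
      rw [Prod.mk.injEq] at hj
      rw [← hj.2, hj.1]
    subst hτ
    refine ⟨rfl, hA.antisymm fun p hp => ?_⟩
    obtain ⟨i, -, rfl⟩ := mem_image.mp hp
    exact hall i
  · rintro ⟨rfl, rfl⟩ i
    exact mem_image_of_mem _ (mem_univ i)

theorem eval_hPrime_blockIndicator [NeZero c] (π : Fin K → ((Fin c → Fin a) ≃ (Fin m × Fin m)))
    (k : Fin K) {τ : Fin c → Fin a} {A : Finset (Fin c × Fin a)} (hA : A ⊆ graphFinset τ)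
    (y : Fin m × Fin m → F) :
    eval (blockIndicator k A (Sum.elim 0 y)) (hPrime F c K a m π) =
      if A = graphFinset τ then y (π k τ) else 0 := by
  have hmonomial : ∀ k' τ', eval (blockIndicator k A (Sum.elim 0 y))
      (∏ i, X (Sum.inl (i, k', τ' i))) = if k' = k ∧ τ' = τ ∧ A = graphFinset τ then 1 else 0 := by
    intro k' τ'
    simp only [map_prod, eval_X, blockIndicator]
    by_cases hk : k' = k
    · simp only [hk, if_true, true_and, prod_boole, mem_univ, forall_const,
        forall_mem_iff_of_subset_graphFinset hA]
    · simp only [hk, if_false, Sum.elim_inl, Pi.zero_apply, false_and]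
      exact prod_eq_zero (mem_univ 0) rfl
  simp [hPrime, hmonomial, blockIndicator, ite_and]

theorem graphFinset_nonempty [NeZero c] (τ : Fin c → Fin a) : (graphFinset τ).Nonempty :=
  univ_nonempty.image _

theorem xToZero_coeffPolySM [NeZero c] (π : Fin K → ((Fin c → Fin a) ≃ (Fin m × Fin m)))
    (β : F) (g : MvPolynomial (HVar c K a m) F) (hgml : ∀ v, g.degreeOf v ≤ 1)
    (hg : ∀ b : HVar c K a m → F, (∀ v, b v = 0 ∨ b v = 1) →
        eval b g * (eval b (hPrime F c K a m π) + β) = 1)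
    (k : Fin K) (τ : Fin c → Fin a) :
    xToZero (coeffPolySM g k τ) = C ((β + 1)⁻¹ - β⁻¹) * X (Sum.inr (π k τ)) := by
  refine eq_of_degreeOf_le_one_of_eval_eq (fun v => ?_) (fun v => ?_) fun b hb => ?_
  · exact (degreeOf_xToZero_le _ v).trans ((degreeOf_coeffPolySM_le g k τ v).trans (hgml v))
  · refine (degreeOf_C_mul_le _ _ _).trans ?_
    rw [degreeOf_X]
    split_ifs <;> simp
  · have hb' : ∀ v, (Sum.elim 0 (b ∘ Sum.inr) : HVar c K a m → F) v = 0 ∨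
        (Sum.elim 0 (b ∘ Sum.inr) : HVar c K a m → F) v = 1 := by
      rintro (p | y)
      · simp
      · exact hb _
    have hpoint : ∀ A ∈ (graphFinset τ).powerset,
        eval (blockIndicator k A (Sum.elim 0 (b ∘ Sum.inr))) g =
          if A = graphFinset τ then (β + b (Sum.inr (π k τ)))⁻¹ else β⁻¹ := by
      intro A hA
      rw [eq_inv_of_mul_eq_one_left (hg _ (blockIndicator_boolean k A hb')),
        eval_hPrime_blockIndicator π k (mem_powerset.mp hA)]
      split_ifs <;> simp [add_comm]
    rw [eval_xToZero, eval_coeffPolySM, sum_congr rfl fun A hA => by rw [hpoint A hA],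
      sum_powerset_neg_one_pow_card_sdiff_mul_ite (graphFinset_nonempty τ)]
    simp only [map_mul, eval_C, eval_X]
    rcases hb (Sum.inr (π k τ)) with h | h <;> simp [h]

end Blocks

theorem algIndep_coeffs_of_multilinear_inverse_hPrime_general
    {F : Type*} [Field F] (c K a m : ℕ) (hc : 3 < c)
    (π : Fin K → ((Fin c → Fin a) ≃ (Fin m × Fin m)))
    (β : F)
    (g : MvPolynomial ((Fin c × Fin K × Fin a) ⊕ (Fin m × Fin m)) F)
    (hgml : ∀ v, g.degreeOf v ≤ 1)
    (hg : ∀ b : ((Fin c × Fin K × Fin a) ⊕ (Fin m × Fin m)) → F,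
        (∀ v, b v = 0 ∨ b v = 1) →
        eval b g * (eval b (hPrime F c K a m π) + β) = 1)
    (k : Fin K) :
    AlgebraicIndependent F (fun τ : Fin c → Fin a => coeffPolySM g k τ) := by
  have : NeZero c := ⟨by omega⟩
  have hc₀ : (β + 1)⁻¹ - β⁻¹ ≠ 0 := sub_ne_zero.mpr (inv_injective.ne (by simp))
  refine AlgebraicIndependent.of_comp xToZero ?_
  have hspec : xToZero ∘ (fun τ => coeffPolySM g k τ) =
      (fun v => C ((β + 1)⁻¹ - β⁻¹) * X v) ∘ (Sum.inr ∘ π k) :=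
    funext (xToZero_coeffPolySM π β g hgml hg k)
  rw [hspec]
  exact (algebraicIndependent_C_mul_X hc₀).comp _ (Sum.inr_injective.comp (π k).injective)

/-- For the unique multilinear polynomial `g` agreeing with `1/(h' + β)` on the Boolean
hypercube, and any block index `k`, the coefficient polynomials
`{g_m : m set-multilinear over X^{(k)}}` form a family of `n² = a^c` algebraically
independent polynomials over `F`; in particular `alg-rank_{X^{(k)}}(g) ≥ n²`. -/
theorem algIndep_coeffs_of_multilinear_inverse_hPrime
    {F : Type*} [Field F] (c K a m : ℕ) (hc : 3 < c) (hcard : a ^ c = m ^ 2)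
    (π : Fin K → ((Fin c → Fin a) ≃ (Fin m × Fin m)))
    (β : F) (hβ0 : β ≠ 0) (hβ1 : β ≠ -1)
    (hunsat : ∀ b : ((Fin c × Fin K × Fin a) ⊕ (Fin m × Fin m)) → F,
        (∀ v, b v = 0 ∨ b v = 1) → eval b (hPrime F c K a m π) + β ≠ 0)
    (g : MvPolynomial ((Fin c × Fin K × Fin a) ⊕ (Fin m × Fin m)) F)
    (hgml : ∀ v, g.degreeOf v ≤ 1)
    (hg : ∀ b : ((Fin c × Fin K × Fin a) ⊕ (Fin m × Fin m)) → F,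
        (∀ v, b v = 0 ∨ b v = 1) →
        eval b g * (eval b (hPrime F c K a m π) + β) = 1)
    (k : Fin K) :
    AlgebraicIndependent F (fun τ : Fin c → Fin a => coeffPolySM g k τ) :=
  algIndep_coeffs_of_multilinear_inverse_hPrime_general c K a m hc π β g hgml hg k
end

section
/- Let F be a field, X = X_1 ⊔ … ⊔ X_q a finite set of variables partitioned into q disjoint blocks, and for each j ∈ [q] let g_j ∈ F[X_j] be a multilinear polynomial. Let (Y, Z) be any partition of X and set Y_j = Y ∩ X_j, Z_j = Z ∩ X_j. Then rank(M_{Y,Z}(∏_{j=1}^q g_j)) = ∏_{j=1}^q rank(M_{Y_j,Z_j}(g_j)). -/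
/-!
Split every subset `A ⊆ Y` into `A ∩ S` and `A \ S`. When `f` involves only the variables in
`S` and `h` none of them, the coefficient of `x_A x_B` in `f * h` is the product of the
coefficient of `x_{A ∩ S} x_{B ∩ S}` in `f` and that of `x_{A \ S} x_{B \ S}` in `h`. Hence
`M_{Y,Z}(f * h)` is a reindexing of the Kronecker product `M_{Y∩S,Z∩S}(f) ⊗ M_{Y\S,Z\S}(h)`,
whose rank is the product of the ranks. Peeling off one block at a time, down to `M_{Y,Z}(1)`
of rank one, gives the theorem.
-/

open MvPolynomial

/-- The partial derivative matrix `M_{Y,Z}(f)` of a multilinear polynomial `f` with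
respect to a partition `(Y, Z)` of the variables: rows are indexed by subsets `A ⊆ Y`,
columns by subsets `B ⊆ Z`, and the `(A, B)` entry is the coefficient in `f` of the
monomial `∏_{y ∈ A} y · ∏_{z ∈ B} z`. -/
noncomputable def pdMatrix {F : Type*} [Field F] {V : Type*} [Fintype V] [DecidableEq V]
    (f : MvPolynomial V F) (Y Z : Finset V) :
    Matrix {A : Finset V // A ⊆ Y} {B : Finset V // B ⊆ Z} F :=
  fun A B => f.coeff ((∑ v ∈ A.1, Finsupp.single v 1) + ∑ v ∈ B.1, Finsupp.single v 1)

open Finset Matrix Kronecker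

theorem LinearMap.finrank_range_tensorProduct_map {F M N M' N' : Type*} [Field F]
    [AddCommGroup M] [AddCommGroup N] [AddCommGroup M'] [AddCommGroup N']
    [Module F M] [Module F N] [Module F M'] [Module F N']
    [FiniteDimensional F M'] [FiniteDimensional F N'] (f : M →ₗ[F] M') (g : N →ₗ[F] N') :
    Module.finrank F (range (TensorProduct.map f g)) =
      Module.finrank F (range f) * Module.finrank F (range g) := by
  have hfactor : TensorProduct.map f g =
      TensorProduct.mapIncl (range f) (range g) ∘ₗ
        TensorProduct.map f.rangeRestrict g.rangeRestrict := by
    rw [TensorProduct.mapIncl, ← TensorProduct.map_comp]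
    rfl
  have hsurj : range (TensorProduct.map f.rangeRestrict g.rangeRestrict) = ⊤ :=
    range_eq_top.mpr <|
      TensorProduct.map_surjective f.surjective_rangeRestrict g.surjective_rangeRestrict
  rw [hfactor, range_comp_of_range_eq_top _ hsurj,
    finrank_range_of_inj (Module.Flat.tensorProduct_mapIncl_injective_of_right _ _),
    Module.finrank_tensorProduct]

theorem Matrix.rank_kronecker {F m n p q : Type*} [Field F] [Fintype m] [Fintype n] [Fintype p]
    [Fintype q] [DecidableEq n] [DecidableEq q] (A : Matrix m n F) (B : Matrix p q F) :
    (A ⊗ₖ B).rank = A.rank * B.rank := by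
  rw [rank_eq_finrank_range_toLin (A ⊗ₖ B) ((Pi.basisFun F m).tensorProduct (Pi.basisFun F p))
      ((Pi.basisFun F n).tensorProduct (Pi.basisFun F q)), toLin_kronecker,
    rank_eq_finrank_range_toLin A (Pi.basisFun F m) (Pi.basisFun F n),
    rank_eq_finrank_range_toLin B (Pi.basisFun F p) (Pi.basisFun F q),
    LinearMap.finrank_range_tensorProduct_map]

theorem MvPolynomial.coeff_add_mul_of_vars_subset {R σ : Type*} [CommSemiring R] [DecidableEq σ]
    {f h : MvPolynomial σ R} {S : Finset σ} (hf : f.vars ⊆ S) (hh : Disjoint h.vars S)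
    {a b : σ →₀ ℕ} (ha : a.support ⊆ S) (hb : Disjoint b.support S) :
    coeff (a + b) (f * h) = coeff a f * coeff b h := by
  rw [coeff_mul]
  refine sum_eq_single (a, b) (fun ⟨x, y⟩ hxy hne => ?_) (fun hab => (hab (by simp)).elim)
  by_contra hprod
  have hx : x.support ⊆ S := (support_subset_vars_of_mem_support
    (mem_support_iff.2 (left_ne_zero_of_mul hprod))).trans hf
  have hy : Disjoint y.support S :=
    hh.mono_left (support_subset_vars_of_mem_support
      (mem_support_iff.2 (right_ne_zero_of_mul hprod)))
  have hfilter : ∀ c d : σ →₀ ℕ, c.support ⊆ S → Disjoint d.support S →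
      (c + d).filter (· ∈ S) = c := fun c d hc hd => by
    rw [Finsupp.filter_add,
      (Finsupp.filter_eq_self_iff _ _).2 fun _ hv => hc (Finsupp.mem_support_iff.2 hv),
      (Finsupp.filter_eq_zero_iff _ _).2 fun _ hv =>
        Finsupp.notMem_support_iff.1 (disjoint_right.1 hd hv), add_zero]
  have hsum : x + y = a + b := mem_antidiagonal.1 hxy
  have hxa : x = a := by rw [← hfilter x y hx hy, hsum, hfilter a b ha hb]
  have hyb : y = b := add_left_cancel (hxa ▸ hsum)
  exact hne (by rw [hxa, hyb])

theorem Finset.support_sum_single_one_subset {V : Type*} [DecidableEq V] (A : Finset V) :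
    (∑ v ∈ A, Finsupp.single v (1 : ℕ)).support ⊆ A :=
  Finsupp.support_finsetSum.trans <| biUnion_subset.2 fun _ hv =>
    Finsupp.support_single_subset.trans (singleton_subset_iff.2 hv)

theorem Finset.sum_single_one_eq_zero_iff {V : Type*} (A : Finset V) :
    ∑ v ∈ A, Finsupp.single v (1 : ℕ) = 0 ↔ A = ∅ := by
  simp [sum_eq_zero_iff, eq_empty_iff_forall_notMem]

def subsetEquivInterProdSdiff {V : Type*} [DecidableEq V] (Y S : Finset V) :
    {A : Finset V // A ⊆ Y} ≃
      {A : Finset V // A ⊆ Y ∩ S} × {A : Finset V // A ⊆ Y \ S} where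
  toFun A :=
    (⟨A.1 ∩ S, inter_subset_inter_right A.2⟩, ⟨A.1 \ S, sdiff_subset_sdiff A.2 le_rfl⟩)
  invFun p := ⟨p.1.1 ∪ p.2.1,
    union_subset (p.1.2.trans inter_subset_left) (p.2.2.trans sdiff_subset)⟩
  left_inv A := Subtype.ext (sup_inf_sdiff A.1 S)
  right_inv p := by
    have h₁ : p.1.1 ⊆ S := p.1.2.trans inter_subset_right
    have h₂ : Disjoint p.2.1 S := disjoint_of_subset_left p.2.2 sdiff_disjoint
    ext1 <;> ext1 <;> simp only
    · rw [union_inter_distrib_right, inter_eq_left.2 h₁, disjoint_iff_inter_eq_empty.1 h₂,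
        union_empty]
    · rw [union_sdiff_distrib, sdiff_eq_empty_iff_subset.2 h₁, sdiff_eq_self_of_disjoint h₂,
        empty_union]

section

variable {F : Type*} [Field F] {V : Type*} [Fintype V] [DecidableEq V]

theorem pdMatrix_mul_eq_submatrix_kronecker {f h : MvPolynomial V F} {S : Finset V}
    (hf : f.vars ⊆ S) (hh : Disjoint h.vars S) (Y Z : Finset V) :
    pdMatrix (f * h) Y Z =
      (pdMatrix f (Y ∩ S) (Z ∩ S) ⊗ₖ pdMatrix h (Y \ S) (Z \ S)).submatrix
        (subsetEquivInterProdSdiff Y S) (subsetEquivInterProdSdiff Z S) := by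
  ext A B
  have hsplit : ∀ C : Finset V, ∑ v ∈ C, Finsupp.single v (1 : ℕ) =
      ∑ v ∈ C ∩ S, Finsupp.single v 1 + ∑ v ∈ C \ S, Finsupp.single v 1 := fun C =>
    (sum_inter_add_sum_sdiff C S _).symm
  have hexp : ∑ v ∈ A.1, Finsupp.single v (1 : ℕ) + ∑ v ∈ B.1, Finsupp.single v 1 =
      (∑ v ∈ A.1 ∩ S, Finsupp.single v 1 + ∑ v ∈ B.1 ∩ S, Finsupp.single v 1) +
        (∑ v ∈ A.1 \ S, Finsupp.single v 1 + ∑ v ∈ B.1 \ S, Finsupp.single v 1) := by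
    rw [hsplit A.1, hsplit B.1]
    abel
  refine (congrArg (coeff · (f * h)) hexp).trans (coeff_add_mul_of_vars_subset hf hh ?_ ?_)
  · exact Finsupp.support_add.trans <| union_subset
      ((support_sum_single_one_subset _).trans inter_subset_right)
      ((support_sum_single_one_subset _).trans inter_subset_right)
  · exact disjoint_of_subset_left (Finsupp.support_add.trans <| union_subset_union
      (support_sum_single_one_subset _) (support_sum_single_one_subset _))
      (disjoint_union_left.2 ⟨sdiff_disjoint, sdiff_disjoint⟩)

theorem rank_pdMatrix_mul {f h : MvPolynomial V F} {S : Finset V}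
    (hf : f.vars ⊆ S) (hh : Disjoint h.vars S) (Y Z : Finset V) :
    (pdMatrix (f * h) Y Z).rank =
      (pdMatrix f (Y ∩ S) (Z ∩ S)).rank * (pdMatrix h (Y \ S) (Z \ S)).rank := by
  rw [pdMatrix_mul_eq_submatrix_kronecker hf hh, rank_submatrix, rank_kronecker]

theorem pdMatrix_one (Y Z : Finset V) :
    pdMatrix (1 : MvPolynomial V F) Y Z =
      vecMulVec (Pi.single ⟨∅, empty_subset Y⟩ 1)
        (Pi.single ⟨∅, empty_subset Z⟩ 1) := by
  ext A B
  simp only [pdMatrix, coeff_one, vecMulVec_apply, Pi.single_apply, Subtype.ext_iff,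
    eq_comm (a := (0 : V →₀ ℕ)), add_eq_zero, sum_single_one_eq_zero_iff, ite_and, ite_mul,
    one_mul, zero_mul]

theorem rank_pdMatrix_one (Y Z : Finset V) :
    (pdMatrix (1 : MvPolynomial V F) Y Z).rank = 1 := by
  refine le_antisymm (pdMatrix_one (F := F) Y Z ▸ rank_vecMulVec_le _ _) ?_
  calc 1 = (1 : Matrix Unit Unit F).rank := by simp
    _ = ((pdMatrix (1 : MvPolynomial V F) Y Z).submatrix (fun _ => ⟨∅, empty_subset Y⟩)
          (fun _ => ⟨∅, empty_subset Z⟩)).rank := by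
        congr 1
        ext
        simp [pdMatrix_one, vecMulVec_apply]
    _ ≤ (pdMatrix (1 : MvPolynomial V F) Y Z).rank := rank_submatrix_le _ _ _

theorem rank_pdMatrix_prod {ι : Type*} (s : Finset ι) (X : ι → Finset V)
    (hX : (s : Set ι).PairwiseDisjoint X) (g : ι → MvPolynomial V F)
    (hg : ∀ j ∈ s, (g j).vars ⊆ X j) (Y Z : Finset V) :
    (pdMatrix (∏ j ∈ s, g j) Y Z).rank =
      ∏ j ∈ s, (pdMatrix (g j) (Y ∩ X j) (Z ∩ X j)).rank := by
  induction s using Finset.cons_induction generalizing Y Z with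
  | empty => simp [rank_pdMatrix_one]
  | cons a s ha ih =>
    rw [coe_cons, Set.pairwiseDisjoint_insert_of_notMem ha] at hX
    obtain ⟨hXs, hdisj⟩ := hX
    have hvars : Disjoint (∏ j ∈ s, g j).vars (X a) :=
      disjoint_of_subset_left (vars_prod _) <| (disjoint_biUnion_left _ _ _).2 fun j hj =>
        disjoint_of_subset_left (hg j (mem_cons_of_mem hj)) (hdisj j hj).symm
    rw [prod_cons, prod_cons, rank_pdMatrix_mul (hg a (mem_cons_self a s)) hvars,
      ih hXs (fun j hj => hg j (mem_cons_of_mem hj))]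
    congr 1
    refine prod_congr rfl fun j hj => ?_
    rw [sdiff_inter_right_comm, sdiff_inter_right_comm,
      sdiff_eq_self_of_disjoint (disjoint_of_subset_left inter_subset_right (hdisj j hj).symm),
      sdiff_eq_self_of_disjoint (disjoint_of_subset_left inter_subset_right (hdisj j hj).symm)]

end

theorem rank_pdMatrix_prod_eq_prod_rank_general
    {F : Type*} [Field F] {V : Type*} [Fintype V] [DecidableEq V] (q : ℕ)
    (Xb : Fin q → Finset V)
    (hXdisj : ∀ j j', j ≠ j' → Disjoint (Xb j) (Xb j'))
    (g : Fin q → MvPolynomial V F)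
    (hvars : ∀ j, (g j).vars ⊆ Xb j)
    (Y Z : Finset V) :
    (pdMatrix (∏ j, g j) Y Z).rank =
      ∏ j, (pdMatrix (g j) (Y ∩ Xb j) (Z ∩ Xb j)).rank :=
  rank_pdMatrix_prod univ Xb (fun j _ j' _ => hXdisj j j') g (fun j _ => hvars j) Y Z

/-- If the variables are partitioned into blocks `X_1 ⊔ ⋯ ⊔ X_q` and each `g_j` is a
multilinear polynomial in the variables of `X_j`, then for any partition `(Y, Z)` of the
variables, `rank M_{Y,Z}(∏_j g_j) = ∏_j rank M_{Y ∩ X_j, Z ∩ X_j}(g_j)`. -/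
theorem rank_pdMatrix_prod_eq_prod_rank
    {F : Type*} [Field F] {V : Type*} [Fintype V] [DecidableEq V] (q : ℕ)
    (Xb : Fin q → Finset V)
    (hXdisj : ∀ j j', j ≠ j' → Disjoint (Xb j) (Xb j'))
    (hXcover : Finset.univ.biUnion Xb = (Finset.univ : Finset V))
    (g : Fin q → MvPolynomial V F)
    (hml : ∀ j v, (g j).degreeOf v ≤ 1)
    (hvars : ∀ j, (g j).vars ⊆ Xb j)
    (Y Z : Finset V) (hYZdisj : Disjoint Y Z) (hYZcover : Y ∪ Z = Finset.univ) :
    (pdMatrix (∏ j, g j) Y Z).rank =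
      ∏ j, (pdMatrix (g j) (Y ∩ Xb j) (Z ∩ Xb j)).rank :=
  rank_pdMatrix_prod_eq_prod_rank_general q Xb hXdisj g hvars Y Z
end

section
/- Let F be a field of characteristic 0 and β ∈ F with β ≠ k·1_F for every integer 0 ≤ k ≤ n. Define g = ∑_{i=0}^{n} c_i · e_{n,i} where c_i = −(i!)/∏_{j=0}^{i}(β − j) and e_{n,0} = 1. Then g is multilinear and g·(∑_{i=1}^{n} x_i − β) ≡ 1 modulo the Boolean ideal; equivalently, g(a)·(∑_{i=1}^{n} a_i − β) = 1 for every a ∈ {0,1}^n, and g is the unique multilinear polynomial with this property. -/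
/-!
At a Boolean point with `m` ones, `e_{n,i}` takes the value `C(m, i)` and `∑ xᵢ` the value `m`.
As `i! C(m, i) = m(m-1)⋯(m-i+1)`, the required identity
`(β - m) ∑_{i ≤ n} i! C(m, i) / ∏_{j ≤ i} (β - j) = 1` telescopes: `β - m` times the
`i`-th summand is `tᵢ - tᵢ₊₁` with `tᵢ = m(m-1)⋯(m-i+1) / β(β-1)⋯(β-i+1)`, and `t_{n+1} = 0`
because `m ≤ n`.
Uniqueness and the membership in the Boolean ideal are the two halves of the Combinatorial
Nullstellensatz for the grid `{0,1}ⁿ`: a polynomial of degree `≤ 1` in each variable vanishing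
on it is zero, and any polynomial vanishing on it is a combination of the `xᵢ² - xᵢ`.
-/

open MvPolynomial

/-- The elementary symmetric polynomial `e_{n,i} = ∑_{S ⊆ [n], |S| = i} ∏_{j ∈ S} x_j`
(with `e_{n,0} = 1`). -/
noncomputable def esym (F : Type*) [Field F] (n i : ℕ) : MvPolynomial (Fin n) F :=
  ∑ S ∈ Finset.powersetCard i (Finset.univ : Finset (Fin n)), ∏ j ∈ S, X j

open Finset Nat

namespace MvPolynomial

section CommSemiring

variable {σ R : Type*} [CommSemiring R]

theorem exists_finset_eq_ite_mem [Fintype σ] [DecidableEq σ] {a : σ → R}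
    (ha : ∀ i, a i = 0 ∨ a i = 1) : ∃ T : Finset σ, a = fun i => if i ∈ T then 1 else 0 := by
  classical
  refine ⟨({i | a i = 1} : Finset σ), ?_⟩
  funext i
  rcases ha i with h | h <;> simp [h]

theorem eval_esymm_ite_mem [Fintype σ] [DecidableEq σ] (T : Finset σ) (k : ℕ) :
    eval (fun i => if i ∈ T then 1 else 0) (esymm σ R k) = ((#T).choose k : R) := by
  simp only [esymm, map_sum, map_prod, eval_X, prod_boole, sum_boole, ← subset_iff,
    ← card_powersetCard]
  congr 2
  ext S
  simp [mem_powersetCard, and_comm]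

theorem degreeOf_esymm_le_one [Fintype σ] [Nontrivial R] (k : ℕ) (i : σ) :
    (esymm σ R k).degreeOf i ≤ 1 := by
  classical
  refine (degreeOf_sum_le i _ _).trans (Finset.sup_le fun t _ => ?_)
  refine (degreeOf_prod_le i _ _).trans ?_
  simp only [degreeOf_X, sum_ite_eq]
  split_ifs <;> omega

end CommSemiring

variable {σ R : Type*} [CommRing R] [IsDomain R] [Finite σ]

theorem eq_zero_of_degreeOf_le_one_of_eval_boolean {p : MvPolynomial σ R}
    (hdeg : ∀ i, p.degreeOf i ≤ 1)
    (hp : ∀ a : σ → R, (∀ i, a i = 0 ∨ a i = 1) → eval a p = 0) : p = 0 := by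
  classical
  exact eq_zero_of_eval_zero_at_prod_finset p (fun _ => {0, 1})
    (fun i => by simpa using Nat.lt_succ_of_le (hdeg i))
    (fun a ha => hp a (by simpa using ha))

theorem mem_span_sq_sub_self_of_eval_boolean {p : MvPolynomial σ R}
    (hp : ∀ a : σ → R, (∀ i, a i = 0 ∨ a i = 1) → eval a p = 0) :
    p ∈ Ideal.span (Set.range fun i : σ => X i ^ 2 - X i) := by
  classical
  obtain ⟨h, -, hph⟩ := combinatorial_nullstellensatz_exists_linearCombination
    (fun _ => {0, 1}) (fun _ => insert_nonempty _ _) p (fun a ha => hp a (by simpa using ha))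
  have hprod : ∀ i : σ, ∏ r ∈ ({0, 1} : Finset R), (X i - C r) = X i ^ 2 - X i := by
    intro i
    rw [prod_pair zero_ne_one, map_zero, map_one, sub_zero]
    ring
  simp only [hprod] at hph
  rw [hph, Ideal.span, ← Finsupp.range_linearCombination]
  exact LinearMap.mem_range_self _ h

end MvPolynomial

theorem esym_eq_esymm (F : Type*) [Field F] (n i : ℕ) : esym F n i = esymm (Fin n) F i := rfl

section DescPochhammer

variable {K : Type*} [Field K]

theorem sub_mul_sum_descPochhammer_div (x β : K) (N : ℕ)
    (hβ : (descPochhammer K N).eval β ≠ 0) :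
    (β - x) * ∑ i ∈ range N, (descPochhammer K i).eval x / (descPochhammer K (i + 1)).eval β =
      1 - (descPochhammer K N).eval x / (descPochhammer K N).eval β := by
  induction N with
  | zero => simp
  | succ N ih =>
    rw [descPochhammer_succ_eval] at hβ
    obtain ⟨hβN, hβsubN⟩ := mul_ne_zero_iff.mp hβ
    rw [sum_range_succ, mul_add, ih hβN, descPochhammer_succ_eval, descPochhammer_succ_eval]
    field_simp
    ring

theorem sub_mul_sum_factorial_mul_choose_div_prod [CharZero K] {β : K} {n m : ℕ}
    (hβ : ∀ k ≤ n, β ≠ k) (hm : m ≤ n) :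
    (β - m) * ∑ i ∈ range (n + 1), (i ! * m.choose i : K) / ∏ j ∈ range (i + 1), (β - j) = 1 := by
  have hβ' : (descPochhammer K (n + 1)).eval β ≠ 0 := by
    rw [descPochhammer_eval_eq_prod_range, prod_ne_zero_iff]
    exact fun j hj => sub_ne_zero.mpr (hβ j (Nat.lt_succ_iff.mp (mem_range.mp hj)))
  have hm' : (descPochhammer K (n + 1)).eval (m : K) = 0 := by
    rw [descPochhammer_eval_eq_descFactorial, Nat.cast_eq_zero, Nat.descFactorial_eq_zero_iff_lt]
    omega
  have h := sub_mul_sum_descPochhammer_div (m : K) β (n + 1) hβ'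
  rw [hm', zero_div, sub_zero] at h
  simp only [descPochhammer_eval_eq_descFactorial, descFactorial_eq_factorial_mul_choose,
    cast_mul] at h
  simpa only [descPochhammer_eval_eq_prod_range] using h

end DescPochhammer

/-- Over a field of characteristic zero, with `β ∉ {0, 1, …, n}`, the polynomial
`g = ∑_{i=0}^{n} c_i e_{n,i}` with `c_i = -(i!)/∏_{j=0}^{i}(β - j)` is multilinear,
satisfies `g · (∑ x_i - β) ≡ 1` modulo the Boolean ideal (equivalently,
`g(a) · (∑ a_i - β) = 1` on the Boolean hypercube), and is the unique multilinear
polynomial with this property. -/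
theorem subset_sum_multilinear_inverse_formula
    {F : Type*} [Field F] [CharZero F] {n : ℕ} (β : F)
    (hβ : ∀ k : ℕ, k ≤ n → β ≠ (k : F))
    (g : MvPolynomial (Fin n) F)
    (hgdef : g = ∑ i ∈ Finset.range (n + 1),
        C (-(Nat.factorial i : F) / ∏ j ∈ Finset.range (i + 1), (β - (j : F))) *
          esym F n i) :
    (∀ i, g.degreeOf i ≤ 1) ∧
    (g * ((∑ i : Fin n, X i) - C β) - 1 ∈
        Ideal.span (Set.range fun i : Fin n => (X i) ^ 2 - X i)) ∧
    (∀ a : Fin n → F, (∀ i, a i = 0 ∨ a i = 1) →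
        eval a g * ((∑ i : Fin n, a i) - β) = 1) ∧
    (∀ g' : MvPolynomial (Fin n) F, (∀ i, g'.degreeOf i ≤ 1) →
        (∀ a : Fin n → F, (∀ i, a i = 0 ∨ a i = 1) →
          eval a g' * ((∑ i : Fin n, a i) - β) = 1) → g' = g) := by
  have hmultilinear : ∀ i, g.degreeOf i ≤ 1 := by
    intro k
    rw [hgdef]
    refine (degreeOf_sum_le k _ _).trans (Finset.sup_le fun i _ => ?_)
    exact (degreeOf_C_mul_le _ _ _).trans (degreeOf_esymm_le_one i k)
  have hcube : ∀ a : Fin n → F, (∀ i, a i = 0 ∨ a i = 1) →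
      eval a g * ((∑ i : Fin n, a i) - β) = 1 := by
    intro a ha
    obtain ⟨T, rfl⟩ := exists_finset_eq_ite_mem ha
    have hsum := sub_mul_sum_factorial_mul_choose_div_prod hβ (card_le_univ T |>.trans_eq (by simp))
    simp only [hgdef, esym_eq_esymm, map_sum, map_mul, eval_C, eval_esymm_ite_mem, sum_boole,
      filter_mem_eq_inter, univ_inter, neg_div, neg_mul, sum_neg_distrib, div_mul_eq_mul_div]
    linear_combination hsum
  refine ⟨hmultilinear, ?_, hcube, fun g' hg' hcube' => ?_⟩
  · refine mem_span_sq_sub_self_of_eval_boolean fun a ha => ?_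
    simp [hcube a ha]
  · rw [← sub_eq_zero]
    refine eq_zero_of_degreeOf_le_one_of_eval_boolean
      (fun i => (degreeOf_sub_le i g' g).trans (max_le (hg' i) (hmultilinear i))) fun a ha => ?_
    have hne : (∑ i, a i) - β ≠ 0 := right_ne_zero_of_mul_eq_one (hcube a ha)
    rw [map_sub, sub_eq_zero]
    exact mul_right_cancel₀ hne ((hcube' a ha).trans (hcube a ha).symm)
end
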